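/- arXiv:1603.07061 — 7 statements merged into one kernel-verified Lean document; each statement's English description precedes it below -/
import Mathlib

section
/- Conservation law for the transport equation with weight 2: let I ⊆ ℝ be an interval containing 0, let u, ω : I × S¹ → ℝ be smooth with ∂_t ω + u ∂_θ ω + 2 (∂_θ u) ω = 0 pointwise, and let η : I × S¹ → S¹ be smooth with ∂_t η(t,θ) = u(t, η(t,θ)) and η(0,θ) = θ. Then for all t ∈ I and all θ ∈ S¹, (∂_θ η(t,θ))² · ω(t, η(t,θ)) = ω(0,θ). -/
open MeasureTheory Real

/-- The `n`-th Fourier coefficient of a `2π`-periodic function `f : ℝ → ℝ`. -/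
noncomputable def fourierC (f : ℝ → ℝ) (n : ℤ) : ℂ :=
  (1 / (2 * π)) * ∫ θ in (0:ℝ)..(2 * π), (f θ : ℂ) * Complex.exp (-Complex.I * (n : ℂ) * (θ : ℂ))

/-- The Hilbert transform on the circle, sending `Σ cₙ e^{inθ}` to `Σ (−i sgn n) cₙ e^{inθ}`. -/
noncomputable def hilbertT (f : ℝ → ℝ) (θ : ℝ) : ℝ :=
  (∑' n : ℤ, -Complex.I * ((n.sign : ℤ) : ℂ) * fourierC f n *
    Complex.exp (Complex.I * (n : ℂ) * (θ : ℂ))).re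

/-- Conservation law for the transport equation with weight 2:
if `ω_t + u ω_θ + 2 u_θ ω = 0` and `η` is the flow of `u`, then
`(∂_θ η)² · ω(t, η(t,θ)) = ω(0,θ)`. -/
theorem conservation_law_transport (I : Set ℝ) (hI : I.OrdConnected) (h0 : (0:ℝ) ∈ I)
    (u ω η : ℝ → ℝ → ℝ)
    -- smoothness on `I × S¹`
    (hu : ContDiffOn ℝ (⊤ : ℕ∞) (fun p : ℝ × ℝ => u p.1 p.2) (I ×ˢ Set.univ))
    (hω : ContDiffOn ℝ (⊤ : ℕ∞) (fun p : ℝ × ℝ => ω p.1 p.2) (I ×ˢ Set.univ))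
    (hη : ContDiffOn ℝ (⊤ : ℕ∞) (fun p : ℝ × ℝ => η p.1 p.2) (I ×ˢ Set.univ))
    -- `u(t,·)`, `ω(t,·)` are functions on `S¹` and `η(t,·)` maps `S¹` to `S¹`
    (huper : ∀ t ∈ I, ∀ θ : ℝ, u t (θ + 2 * π) = u t θ)
    (hωper : ∀ t ∈ I, ∀ θ : ℝ, ω t (θ + 2 * π) = ω t θ)
    (hηper : ∀ t ∈ I, ∀ θ : ℝ, η t (θ + 2 * π) = η t θ + 2 * π)
    -- the transport equation with weight 2
    (hpde : ∀ t ∈ I, ∀ θ : ℝ,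
      derivWithin (fun s => ω s θ) I t + u t θ * deriv (ω t) θ
        + 2 * deriv (u t) θ * ω t θ = 0)
    -- `η` is the Lagrangian flow of `u`
    (hflow : ∀ t ∈ I, ∀ θ : ℝ, derivWithin (fun s => η s θ) I t = u t (η t θ))
    (hinit : ∀ θ : ℝ, η 0 θ = θ) :
    ∀ t ∈ I, ∀ θ : ℝ, (deriv (η t) θ) ^ 2 * ω t (η t θ) = ω 0 θ := by
  intro t ht θ0
  have hη0 : (η 0) = (id : ℝ → ℝ) := funext hinit
  by_cases htriv : ∀ b ∈ I, b = 0
  · have ht0 : t = 0 := htriv t ht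
    subst ht0
    rw [hη0]
    simp
  · push_neg at htriv
    obtain ⟨b, hbI, hb0⟩ := htriv
    have hconv : Convex ℝ I := hI.convex
    have hIcc : Set.Icc (min b 0) (max b 0) ⊆ I := by
      rcases le_total b 0 with h | h
      · simpa [min_eq_left h, max_eq_right h] using hI.out hbI h0
      · simpa [min_eq_right h, max_eq_left h] using hI.out h0 hbI
    have hIoo : Set.Ioo (min b 0) (max b 0) ⊆ I := Set.Ioo_subset_Icc_self.trans hIcc
    have hIint : (interior I).Nonempty := by
      obtain ⟨y, hy⟩ := Set.nonempty_Ioo.mpr (min_lt_max.mpr hb0)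
      exact ⟨y, interior_maximal hIoo isOpen_Ioo hy⟩
    have hUI : UniqueDiffOn ℝ I := uniqueDiffOn_convex hconv hIint
    set S : Set (ℝ × ℝ) := I ×ˢ (Set.univ : Set ℝ) with hS
    have hUS : UniqueDiffOn ℝ S := hUI.prod uniqueDiffOn_univ
    have hmem : ∀ s ∈ I, ∀ x : ℝ, (s, x) ∈ S := fun s hs x => Set.mk_mem_prod hs (Set.mem_univ x)
    have hclI : ∀ s ∈ I, s ∈ closure (interior I) := by
      intro s hs
      obtain ⟨y, hy⟩ := hIint
      have h2 : openSegment ℝ y s ⊆ interior I :=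
        hconv.openSegment_interior_self_subset_interior hy hs
      exact closure_mono h2 (segment_subset_closure_openSegment (right_mem_segment ℝ y s))
    have hclS : ∀ s ∈ I, ∀ x : ℝ, (s, x) ∈ closure (interior S) := by
      intro s hs x
      rw [hS, interior_prod_eq, closure_prod_eq]
      exact ⟨hclI s hs, by simp⟩
    set G := fun p : ℝ × ℝ => η p.1 p.2 with hGdef
    set W := fun p : ℝ × ℝ => ω p.1 p.2 with hWdef
    set U := fun p : ℝ × ℝ => u p.1 p.2 with hUdef
    set DG := fderivWithin ℝ G S with hDGdef
    set DW := fderivWithin ℝ W S with hDWdef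
    set DU := fderivWithin ℝ U S with hDUdef
    set D2G := fderivWithin ℝ DG S with hD2Gdef
    have hGd : DifferentiableOn ℝ G S := hη.differentiableOn (by simp)
    have hWd : DifferentiableOn ℝ W S := hω.differentiableOn (by simp)
    have hUd : DifferentiableOn ℝ U S := hu.differentiableOn (by simp)
    have hDGc : ContDiffOn ℝ 1 DG S := hη.fderivWithin hUS (WithTop.coe_le_coe.mpr le_top)
    have hDGd : DifferentiableOn ℝ DG S := hDGc.differentiableOn one_ne_zero
    have hincT : ∀ x s : ℝ, HasDerivWithinAt (fun r : ℝ => (r, x)) ((1:ℝ), (0:ℝ)) I s :=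
      fun x s => ((hasDerivAt_id s).prodMk (hasDerivAt_const s x)).hasDerivWithinAt
    have hmapT : ∀ x : ℝ, Set.MapsTo (fun r : ℝ => (r, x)) I S := fun x s hs => hmem s hs x
    have hincX : ∀ s x : ℝ, HasDerivAt (fun y : ℝ => ((s : ℝ), y)) ((0:ℝ), (1:ℝ)) x :=
      fun s x => (hasDerivAt_const x s).prodMk (hasDerivAt_id x)
    -- ∂_t η
    have hF1 : ∀ s ∈ I, ∀ x : ℝ, HasDerivWithinAt (fun r => η r x) (DG (s, x) (1, 0)) I s :=
      fun s hs x => by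
        have h := ((hGd (s, x) (hmem s hs x)).hasFDerivWithinAt).comp_hasDerivWithinAt s
          (hincT x s) (hmapT x)
        exact h
    have hF1' : ∀ s ∈ I, ∀ x : ℝ, DG (s, x) (1, 0) = u s (η s x) := by
      intro s hs x
      rw [← hflow s hs x]
      exact ((hF1 s hs x).derivWithin (hUI s hs)).symm
    -- ∂_θ η
    have hF2 : ∀ s ∈ I, ∀ x : ℝ, HasDerivAt (η s) (DG (s, x) (0, 1)) x := by
      intro s hs x
      have h := ((hGd (s, x) (hmem s hs x)).hasFDerivWithinAt).comp_hasDerivWithinAt x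
        ((hincX s x).hasDerivWithinAt (s := Set.univ)) (fun y _ => hmem s hs y)
      rw [hasDerivWithinAt_univ] at h
      exact h
    have hderiv_eq : ∀ s ∈ I, ∀ x : ℝ, deriv (η s) x = DG (s, x) (0, 1) :=
      fun s hs x => (hF2 s hs x).deriv
    -- ∂_t ω
    have hW1 : ∀ s ∈ I, ∀ x : ℝ, HasDerivWithinAt (fun r => ω r x) (DW (s, x) (1, 0)) I s :=
      fun s hs x => by
        have h := ((hWd (s, x) (hmem s hs x)).hasFDerivWithinAt).comp_hasDerivWithinAt s
          (hincT x s) (hmapT x)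
        exact h
    -- ∂_θ ω
    have hW2 : ∀ s ∈ I, ∀ x : ℝ, HasDerivAt (ω s) (DW (s, x) (0, 1)) x := by
      intro s hs x
      have h := ((hWd (s, x) (hmem s hs x)).hasFDerivWithinAt).comp_hasDerivWithinAt x
        ((hincX s x).hasDerivWithinAt (s := Set.univ)) (fun y _ => hmem s hs y)
      rw [hasDerivWithinAt_univ] at h
      exact h
    have hW2' : ∀ s ∈ I, ∀ x : ℝ, DW (s, x) (0, 1) = deriv (ω s) x :=
      fun s hs x => ((hW2 s hs x).deriv).symm
    have hW1' : ∀ s ∈ I, ∀ x : ℝ, DW (s, x) (1, 0)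
        = -(u s x * deriv (ω s) x + 2 * deriv (u s) x * ω s x) := by
      intro s hs x
      have h := (hW1 s hs x).derivWithin (hUI s hs)
      have h2 := hpde s hs x
      linarith
    -- ∂_θ u
    have hU2 : ∀ s ∈ I, ∀ x : ℝ, HasDerivAt (u s) (DU (s, x) (0, 1)) x := by
      intro s hs x
      have h := ((hUd (s, x) (hmem s hs x)).hasFDerivWithinAt).comp_hasDerivWithinAt x
        ((hincX s x).hasDerivWithinAt (s := Set.univ)) (fun y _ => hmem s hs y)
      rw [hasDerivWithinAt_univ] at h
      exact h
    have hU2' : ∀ s ∈ I, ∀ x : ℝ, DU (s, x) (0, 1) = deriv (u s) x :=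
      fun s hs x => ((hU2 s hs x).deriv).symm
    -- ∂_t (∂_θ η)
    have hD2T : ∀ s ∈ I, ∀ x : ℝ,
        HasDerivWithinAt (fun r => DG (r, x) (0, 1)) (D2G (s, x) (1, 0) (0, 1)) I s := by
      intro s hs x
      have h1 : HasDerivWithinAt (fun r => DG (r, x)) (D2G (s, x) (1, 0)) I s :=
        ((hDGd (s, x) (hmem s hs x)).hasFDerivWithinAt).comp_hasDerivWithinAt s
          (hincT x s) (hmapT x)
      exact (ContinuousLinearMap.apply ℝ ℝ ((0:ℝ), (1:ℝ))).hasFDerivAt.comp_hasDerivWithinAt s h1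
    -- ∂_θ (∂_t η)
    have hD2X : ∀ s ∈ I, ∀ x : ℝ,
        HasDerivAt (fun y => DG (s, y) (1, 0)) (D2G (s, x) (0, 1) (1, 0)) x := by
      intro s hs x
      have h1 := ((hDGd (s, x) (hmem s hs x)).hasFDerivWithinAt).comp_hasDerivWithinAt x
        ((hincX s x).hasDerivWithinAt (s := Set.univ)) (fun y _ => hmem s hs y)
      rw [hasDerivWithinAt_univ] at h1
      exact (ContinuousLinearMap.apply ℝ ℝ ((1:ℝ), (0:ℝ))).hasFDerivAt.comp_hasDerivAt x h1
    -- Clairaut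
    have hsymm : ∀ s ∈ I, ∀ x : ℝ, D2G (s, x) (1, 0) (0, 1) = D2G (s, x) (0, 1) (1, 0) := by
      intro s hs x
      have h := (hη (s, x) (hmem s hs x)).isSymmSndFDerivWithinAt (by simp; exact WithTop.coe_le_coe.mpr le_top)
        hUS (hclS s hs x) (hmem s hs x)
      exact h (1, 0) (0, 1)
    -- identify mixed second derivative
    have hmix : ∀ s ∈ I, ∀ x : ℝ,
        D2G (s, x) (0, 1) (1, 0) = deriv (u s) (η s x) * DG (s, x) (0, 1) := by
      intro s hs x
      have heq : (fun y => DG (s, y) (1, 0)) = fun y => u s (η s y) :=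
        funext fun y => hF1' s hs y
      have h1 : HasDerivAt (fun y => u s (η s y)) (D2G (s, x) (0, 1) (1, 0)) x := by
        rw [← heq]; exact hD2X s hs x
      have h2 : HasDerivAt (fun y => u s (η s y)) (DU (s, η s x) (0, 1) * DG (s, x) (0, 1)) x :=
        (hU2 s hs (η s x)).comp x (hF2 s hs x)
      rw [h1.unique h2, hU2' s hs (η s x)]
    -- the conserved quantity
    set F := fun r : ℝ => (DG (r, θ0) (0, 1)) ^ 2 * ω r (η r θ0) with hFdef
    have hkey : ∀ s ∈ I, HasDerivWithinAt F 0 I s := by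
      intro s hs
      have h1 : HasDerivWithinAt (fun r => DG (r, θ0) (0, 1))
          (deriv (u s) (η s θ0) * DG (s, θ0) (0, 1)) I s := by
        have h := hD2T s hs θ0
        rwa [hsymm s hs θ0, hmix s hs θ0] at h
      have hflow' : HasDerivWithinAt (fun r : ℝ => (r, η r θ0)) ((1:ℝ), u s (η s θ0)) I s := by
        have h := (hasDerivAt_id s).hasDerivWithinAt.prodMk (hF1 s hs θ0)
        rwa [hF1' s hs θ0] at h
      have h2 : HasDerivWithinAt (fun r => ω r (η r θ0))
          (DW (s, η s θ0) (1, u s (η s θ0))) I s :=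
        by
          have h := ((hWd (s, η s θ0) (hmem s hs (η s θ0))).hasFDerivWithinAt).comp_hasDerivWithinAt s
            hflow' (fun r hr => hmem r hr (η r θ0))
          exact h
      have hDWval : DW (s, η s θ0) (1, u s (η s θ0))
          = -2 * deriv (u s) (η s θ0) * ω s (η s θ0) := by
        have hsplit : ((1:ℝ), u s (η s θ0)) = ((1:ℝ), (0:ℝ)) + u s (η s θ0) • ((0:ℝ), (1:ℝ)) := by
          simp
        rw [hsplit, map_add, _root_.map_smul, smul_eq_mul, hW1' s hs (η s θ0), hW2' s hs (η s θ0)]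
        ring
      rw [hDWval] at h2
      have h3 := (h1.pow 2).mul h2
      refine HasDerivWithinAt.congr_deriv (f := F) h3 ?_
      simp only [Pi.pow_apply]
      push_cast
      ring
    have hcon := Convex.norm_image_sub_le_of_norm_hasDerivWithin_le
      (C := (0:ℝ)) (f' := fun _ : ℝ => (0:ℝ)) (fun s hs => hkey s hs)
      (fun s hs => by simp) hconv h0 ht
    have hF : F t = F 0 := by
      simp only [zero_mul, norm_le_zero_iff, sub_eq_zero] at hcon
      exact hcon
    have hg : DG ((0:ℝ), θ0) (0, 1) = 1 := by
      rw [← hderiv_eq 0 h0 θ0, hη0]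
      simp
    rw [hderiv_eq t ht θ0]
    calc DG (t, θ0) (0, 1) ^ 2 * ω t (η t θ0) = F t := rfl
      _ = F 0 := hF
      _ = ω 0 θ0 := by rw [hFdef]; simp [hg, hinit θ0]
end

section
/- Hardy-type inequality on the disc: let Φ be holomorphic on an open neighborhood of the closed unit disc, let z ∈ ℂ with |z| = 1, and let Υ(w) = (Φ(w) − Φ(z))/(w − z) for w ≠ z, extended by Υ(z) = Φ′(z). Then ∬_𝔻 |Υ′(w)|² dA(w) ≤ ∬_𝔻 |Φ″(w)|² dA(w), where dA is Lebesgue area measure on the open unit disc 𝔻. -/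
open MeasureTheory Real

/-! For `w ≠ z` in the disc, Taylor's formula along the segment `[z, w]` gives
`Υ'(w) = ∫₀¹ t Φ''(z + t(w - z)) dt`, so by Cauchy–Schwarz in `t`,
`|Υ'(w)|² ≤ ∫₀¹ t² |Φ''(z + t(w - z))|² dt`. Integrate over `𝔻` and exchange the integrals:
since `z` lies on the closed disc, the homothety `w ↦ z + t(w - z)` maps `𝔻` into itself with
Jacobian `t²`, so the inner integral is at most `t⁻² ∫_𝔻 |Φ''|²` and the weights `t²` cancel. -/

open Set Metric AffineMap Module
open scoped ENNReal

section Homothety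

variable {E : Type*} [NormedAddCommGroup E] [NormedSpace ℝ E]

theorem IsOpen.mapsTo_homothety {s : Set E} (hs : IsOpen s) (hconv : Convex ℝ s) {c : E}
    (hc : c ∈ closure s) {r : ℝ} (hr : r ∈ Ioc 0 1) : MapsTo (homothety c r) s s := by
  intro x hx
  have := hconv.combo_closure_interior_mem_interior hc (hs.interior_eq.symm ▸ hx)
    (sub_nonneg.2 hr.2) hr.1 (sub_add_cancel 1 r)
  rwa [hs.interior_eq, ← lineMap_apply_module, ← homothety_eq_lineMap] at this

variable [MeasurableSpace E] [BorelSpace E] [FiniteDimensional ℝ E]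
  (μ : Measure E) [μ.IsAddHaarMeasure]

theorem lintegral_comp_homothety (f : E → ℝ≥0∞) (c : E) {r : ℝ} (hr : r ≠ 0) :
    ∫⁻ x, f (homothety c r x) ∂μ = ENNReal.ofReal |(r ^ finrank ℝ E)⁻¹| * ∫⁻ x, f x ∂μ := by
  simp only [homothety_apply, vsub_eq_sub, vadd_eq_add]
  calc ∫⁻ x, f (r • (x - c) + c) ∂μ = ∫⁻ x, f (r • x + c) ∂μ :=
        lintegral_sub_right_eq_self (fun x => f (r • x + c)) c
    _ = ∫⁻ y, f (y + c) ∂(Measure.map (r • ·) μ) :=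
        (lintegral_map_equiv (fun y => f (y + c)) (MeasurableEquiv.smul₀ r hr)).symm
    _ = _ := by
        rw [Measure.map_addHaar_smul μ hr, lintegral_smul_measure, smul_eq_mul,
          lintegral_add_right_eq_self f c]

theorem setLIntegral_comp_homothety_le {s : Set E} (hs : MeasurableSet s) (f : E → ℝ≥0∞)
    {c : E} {r : ℝ} (hr : r ≠ 0) (hmaps : MapsTo (homothety c r) s s) :
    ∫⁻ x in s, f (homothety c r x) ∂μ ≤
      ENNReal.ofReal |(r ^ finrank ℝ E)⁻¹| * ∫⁻ x in s, f x ∂μ := by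
  calc ∫⁻ x in s, f (homothety c r x) ∂μ = ∫⁻ x in s, s.indicator f (homothety c r x) ∂μ :=
        setLIntegral_congr_fun hs fun x hx => (indicator_of_mem (hmaps hx) f).symm
    _ ≤ ∫⁻ x, s.indicator f (homothety c r x) ∂μ := setLIntegral_le_lintegral s _
    _ = _ := by rw [lintegral_comp_homothety μ _ c hr, lintegral_indicator hs]

end Homothety

section Integrals

variable {α E : Type*} [MeasurableSpace α] [NormedAddCommGroup E] {μ : Measure α}

theorem enorm_integral_sq_le_lintegral_enorm_sq [NormedSpace ℝ E] [IsProbabilityMeasure μ]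
    {f : α → E} (hf : AEStronglyMeasurable f μ) :
    ‖∫ x, f x ∂μ‖ₑ ^ 2 ≤ ∫⁻ x, ‖f x‖ₑ ^ 2 ∂μ := by
  calc ‖∫ x, f x ∂μ‖ₑ ^ 2 ≤ eLpNorm f 1 μ ^ 2 := by
        rw [eLpNorm_one_eq_lintegral_enorm]
        gcongr
        exact enorm_integral_le_lintegral_enorm f
    _ ≤ eLpNorm f 2 μ ^ 2 := by
        gcongr
        exact eLpNorm_le_eLpNorm_of_exponent_le one_le_two hf
    _ = ∫⁻ x, ‖f x‖ₑ ^ 2 ∂μ := by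
        simpa using eLpNorm_nnreal_pow_eq_lintegral (f := f) (μ := μ) (p := 2) two_ne_zero

theorem integral_norm_sq_le_of_lintegral_le {f g : α → E} (hf : AEStronglyMeasurable f μ)
    (hg : Integrable (fun x => ‖g x‖ ^ 2) μ)
    (h : ∫⁻ x, ‖f x‖ₑ ^ 2 ∂μ ≤ ∫⁻ x, ‖g x‖ₑ ^ 2 ∂μ) :
    ∫ x, ‖f x‖ ^ 2 ∂μ ≤ ∫ x, ‖g x‖ ^ 2 ∂μ := by
  have hsq : ∀ x : E, ENNReal.ofReal (‖x‖ ^ 2) = ‖x‖ₑ ^ 2 := fun x => by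
    rw [ENNReal.ofReal_pow (norm_nonneg x), ofReal_norm]
  rw [integral_eq_lintegral_of_nonneg_ae (ae_of_all _ fun x => by positivity) (by fun_prop),
    integral_eq_lintegral_of_nonneg_ae (ae_of_all _ fun x => by positivity) hg.1]
  simp only [hsq]
  refine ENNReal.toReal_mono ?_ h
  simpa [hsq] using hg.lintegral_lt_top.ne

end Integrals

section DifferenceQuotient

variable {Φ : ℂ → ℂ} {U : Set ℂ} {z w : ℂ}

theorem integral_mul_deriv_deriv_lineMap (hU : IsOpen U) (hΦ : DifferentiableOn ℂ Φ U)
    (hzw : segment ℝ z w ⊆ U) :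
    (w - z) ^ 2 * ∫ t in (0:ℝ)..1, (t : ℂ) * deriv (deriv Φ) (lineMap z w t) =
      (w - z) * deriv Φ w - (Φ w - Φ z) := by
  have hΦ' := hΦ.deriv hU
  have hmem : ∀ t ∈ uIcc (0:ℝ) 1, lineMap z w t ∈ U := fun t ht =>
    hzw (lineMap_mem_segment ℝ z w (by rwa [uIcc_of_le zero_le_one] at ht))
  have hderiv : ∀ t ∈ uIcc (0:ℝ) 1,
      HasDerivAt (fun s : ℝ => (s : ℂ) * (w - z) * deriv Φ (lineMap z w s) - Φ (lineMap z w s))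
        ((w - z) ^ 2 * ((t : ℂ) * deriv (deriv Φ) (lineMap z w t))) t := by
    intro t ht
    have hγ : HasDerivAt (fun s : ℝ => lineMap z w s) (w - z) t := hasDerivAt_lineMap
    have hΦγ := ((hΦ.differentiableAt (hU.mem_nhds (hmem t ht))).hasDerivAt).comp t hγ
    have hΦ'γ := ((hΦ'.differentiableAt (hU.mem_nhds (hmem t ht))).hasDerivAt).comp t hγ
    have hlin : HasDerivAt (fun s : ℝ => (s : ℂ) * (w - z)) (w - z) t := by
      simpa using (Complex.ofRealCLM.hasDerivAt (x := t)).mul_const (w - z)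
    refine ((hlin.mul hΦ'γ).sub hΦγ).congr_deriv ?_
    simp only [Function.comp_apply]
    ring
  have hcont : ContinuousOn
      (fun t : ℝ => (w - z) ^ 2 * ((t : ℂ) * deriv (deriv Φ) (lineMap z w t))) (uIcc 0 1) :=
    continuousOn_const.mul (Complex.continuous_ofReal.continuousOn.mul
      ((hΦ'.deriv hU).continuousOn.comp lineMap_continuous.continuousOn hmem))
  rw [← intervalIntegral.integral_const_mul,
    intervalIntegral.integral_eq_sub_of_hasDerivAt hderiv hcont.intervalIntegrable]
  simp only [lineMap_apply_one, lineMap_apply_zero]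
  push_cast
  ring

theorem deriv_dslope_eq_integral (hU : IsOpen U) (hΦ : DifferentiableOn ℂ Φ U)
    (hzw : segment ℝ z w ⊆ U) (hwz : w ≠ z) :
    deriv (dslope Φ z) w = ∫ t in (0:ℝ)..1, (t : ℂ) * deriv (deriv Φ) (lineMap z w t) := by
  have hwU : w ∈ U := hzw (right_mem_segment ℝ z w)
  have hslope : dslope Φ z =ᶠ[nhds w] fun v => (Φ v - Φ z) / (v - z) := by
    filter_upwards [eventually_ne_nhds hwz] with v hv
    rw [dslope_of_ne Φ hv, slope_def_field]
  have hquot : HasDerivAt (fun v => (Φ v - Φ z) / (v - z))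
      ((deriv Φ w * (w - z) - (Φ w - Φ z) * 1) / (w - z) ^ 2) w :=
    ((hΦ.differentiableAt (hU.mem_nhds hwU)).hasDerivAt.sub_const (Φ z)).div
      ((hasDerivAt_id w).sub_const z) (sub_ne_zero.2 hwz)
  rw [(hquot.congr_of_eventuallyEq hslope).deriv,
    div_eq_iff (pow_ne_zero 2 (sub_ne_zero.2 hwz))]
  linear_combination (integral_mul_deriv_deriv_lineMap hU hΦ hzw).symm

theorem enorm_deriv_dslope_sq_le (hU : IsOpen U) (hΦ : DifferentiableOn ℂ Φ U)
    (hzw : segment ℝ z w ⊆ U) (hwz : w ≠ z) :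
    ‖deriv (dslope Φ z) w‖ₑ ^ 2 ≤
      ∫⁻ t in Ioc (0:ℝ) 1, ‖(t : ℂ)‖ₑ ^ 2 * ‖deriv (deriv Φ) (lineMap z w t)‖ₑ ^ 2 := by
  have : IsProbabilityMeasure (volume.restrict (Ioc (0:ℝ) 1)) := ⟨by simp⟩
  rw [deriv_dslope_eq_integral hU hΦ hzw hwz, intervalIntegral.integral_of_le zero_le_one]
  refine (enorm_integral_sq_le_lintegral_enorm_sq ?_).trans_eq ?_
  · exact (Complex.measurable_ofReal.mul
      ((measurable_deriv _).comp lineMap_continuous.measurable)).aestronglyMeasurable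
  · simp only [enorm_mul, mul_pow]

theorem enorm_ofReal_sq_mul_ofReal_abs_inv_pow_finrank {t : ℝ} (ht : t ≠ 0) :
    ‖(t : ℂ)‖ₑ ^ 2 * ENNReal.ofReal |(t ^ finrank ℝ ℂ)⁻¹| = 1 := by
  rw [Complex.finrank_real_complex, ← ofReal_norm, ← ENNReal.ofReal_pow (norm_nonneg _),
    ← ENNReal.ofReal_mul (by positivity), Complex.norm_real, Real.norm_eq_abs, abs_inv, abs_pow,
    mul_inv_cancel₀ (pow_ne_zero 2 (abs_ne_zero.2 ht)), ENNReal.ofReal_one]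

theorem lintegral_enorm_deriv_dslope_sq_le {s : Set ℂ} (hU : IsOpen U)
    (hΦ : DifferentiableOn ℂ Φ U) (hs : IsOpen s) (hconv : Convex ℝ s) (hz : z ∈ closure s)
    (hsU : closure s ⊆ U) :
    ∫⁻ w in s, ‖deriv (dslope Φ z) w‖ₑ ^ 2 ≤ ∫⁻ w in s, ‖deriv (deriv Φ) w‖ₑ ^ 2 := by
  set F := deriv (deriv Φ)
  have hpointwise : ∀ᵐ w ∂volume.restrict s, ‖deriv (dslope Φ z) w‖ₑ ^ 2 ≤
      ∫⁻ t in Ioc (0:ℝ) 1, ‖(t : ℂ)‖ₑ ^ 2 * ‖F (homothety z t w)‖ₑ ^ 2 := by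
    filter_upwards [ae_restrict_mem hs.measurableSet, Measure.ae_ne _ z] with w hw hwz
    simpa only [homothety_eq_lineMap] using enorm_deriv_dslope_sq_le hU hΦ
      ((hconv.closure.segment_subset hz (subset_closure hw)).trans hsU) hwz
  have hjoint : Measurable fun p : ℂ × ℝ => ‖(p.2 : ℂ)‖ₑ ^ 2 * ‖F (homothety z p.2 p.1)‖ₑ ^ 2 := by
    simp only [homothety_apply, vsub_eq_sub, vadd_eq_add]
    have hF : Measurable F := measurable_deriv _
    fun_prop
  calc ∫⁻ w in s, ‖deriv (dslope Φ z) w‖ₑ ^ 2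
      ≤ ∫⁻ w in s, ∫⁻ t in Ioc (0:ℝ) 1, ‖(t : ℂ)‖ₑ ^ 2 * ‖F (homothety z t w)‖ₑ ^ 2 :=
        lintegral_mono_ae hpointwise
    _ = ∫⁻ t in Ioc (0:ℝ) 1, ∫⁻ w in s, ‖(t : ℂ)‖ₑ ^ 2 * ‖F (homothety z t w)‖ₑ ^ 2 :=
        lintegral_lintegral_swap hjoint.aemeasurable
    _ = ∫⁻ t in Ioc (0:ℝ) 1, ‖(t : ℂ)‖ₑ ^ 2 * ∫⁻ w in s, ‖F (homothety z t w)‖ₑ ^ 2 := by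
        simp only [lintegral_const_mul' _ _ (ENNReal.pow_ne_top enorm_ne_top)]
    _ ≤ ∫⁻ t in Ioc (0:ℝ) 1, ∫⁻ w in s, ‖F w‖ₑ ^ 2 := by
        refine setLIntegral_mono' measurableSet_Ioc fun t ht => ?_
        calc ‖(t : ℂ)‖ₑ ^ 2 * ∫⁻ w in s, ‖F (homothety z t w)‖ₑ ^ 2
            ≤ ‖(t : ℂ)‖ₑ ^ 2 *
                (ENNReal.ofReal |(t ^ finrank ℝ ℂ)⁻¹| * ∫⁻ w in s, ‖F w‖ₑ ^ 2) := by
              gcongr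
              exact setLIntegral_comp_homothety_le volume hs.measurableSet (fun w => ‖F w‖ₑ ^ 2)
                ht.1.ne' (hs.mapsTo_homothety hconv hz ht)
          _ = ∫⁻ w in s, ‖F w‖ₑ ^ 2 := by rw [← mul_assoc, enorm_ofReal_sq_mul_ofReal_abs_inv_pow_finrank ht.1.ne', one_mul]
    _ = ∫⁻ w in s, ‖F w‖ₑ ^ 2 := by simp

end DifferenceQuotient

/-- Hardy-type inequality on the disc:
`∬_𝔻 |Υ′(w)|² dA ≤ ∬_𝔻 |Φ″(w)|² dA` for the difference quotient
`Υ(w) = (Φ(w) − Φ(z))/(w − z)` with `|z| = 1`. -/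
theorem hardy_inequality_disc (Φ : ℂ → ℂ) (U : Set ℂ) (hU : IsOpen U)
    (hsub : Metric.closedBall (0:ℂ) 1 ⊆ U) (hΦ : DifferentiableOn ℂ Φ U)
    (z : ℂ) (hz : ‖z‖ = 1) :
    (∫ w in Metric.ball (0:ℂ) 1,
        ‖deriv (fun w' => if w' = z then deriv Φ z else (Φ w' - Φ z) / (w' - z)) w‖ ^ 2)
      ≤ ∫ w in Metric.ball (0:ℂ) 1, ‖deriv (deriv Φ) w‖ ^ 2 := by
  have hΥ : (fun w' => if w' = z then deriv Φ z else (Φ w' - Φ z) / (w' - z)) = dslope Φ z := by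
    ext w'
    split_ifs with h
    · rw [h, dslope_same]
    · rw [dslope_of_ne Φ h, slope_def_field]
  have hclosure : closure (ball (0:ℂ) 1) = closedBall 0 1 := closure_ball 0 one_ne_zero
  have hF : Integrable (fun w => ‖deriv (deriv Φ) w‖ ^ 2) (volume.restrict (ball (0:ℂ) 1)) :=
    (((((hΦ.deriv hU).deriv hU).continuousOn.mono hsub).norm.pow 2).integrableOn_compact
      (isCompact_closedBall 0 1)).mono_set ball_subset_closedBall
  rw [hΥ]
  exact integral_norm_sq_le_of_lintegral_le (measurable_deriv _).aestronglyMeasurable hF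
    (lintegral_enorm_deriv_dslope_sq_le hU hΦ isOpen_ball (convex_ball 0 1)
      (hclosure ▸ mem_closedBall_zero_iff.2 hz.le) (hclosure ▸ hsub))
end

section
/- Boundary difference-quotient inequality: let Φ be holomorphic on an open neighborhood of the closed unit disc and let θ ∈ [0, 2π). Then ∫₀^{2π} |(Φ(e^{iψ}) − Φ(e^{iθ}))/(e^{iψ} − e^{iθ})|² dψ ≤ π² ∫₀^{2π} |Φ′(e^{iψ})|² dψ, where the integrand on the left is interpreted as |Φ′(e^{iθ})|² at ψ = θ. -/
/-!
Write `ψ = θ + x` with `x ∈ [-π, π]` and `g t = ‖Φ'(e^{i(θ+t)})‖`. Integrating `Φ'` along the arc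
bounds `‖Φ(e^{iψ}) - Φ(e^{iθ})‖` by `|∫₀ˣ g|`, while Jordan's inequality bounds the chord
`‖e^{iψ} - e^{iθ}‖` below by `(2/π)|x|`. Hence the difference quotient is at most
`(π/2) |(1/x) ∫₀ˣ g|`, and Hardy's inequality `∫ ((1/x) ∫₀ˣ g)² ≤ 4 ∫ g²` on both sides of `0`
gives the constant `(π/2)² · 4 = π²`.

Hardy's inequality comes from integrating `(H²/x)' = 2 h F - F²` over `[0, T]`, where `H` is the
primitive of `h` and `F = H/x`: the result `H(T)²/T` is nonnegative, and `2 h F ≤ 2 h² + F²/2`.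
-/

open MeasureTheory Real

open intervalIntegral Set Filter Topology Interval

/-- The Hardy operator; its value at `0` is the junk value `0 / 0 = 0`. -/
noncomputable def hardyAverage (h : ℝ → ℝ) (x : ℝ) : ℝ := (∫ t in (0:ℝ)..x, h t) / x

namespace hardyAverage

variable {h : ℝ → ℝ}

lemma abs_le {C x : ℝ} (hC0 : 0 ≤ C) (hC : ∀ t ∈ Ι 0 x, |h t| ≤ C) :
    |hardyAverage h x| ≤ C := by
  rcases eq_or_ne x 0 with rfl | hx
  · simpa [hardyAverage] using hC0
  rw [hardyAverage, abs_div, div_le_iff₀ (abs_pos.2 hx)]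
  simpa using norm_integral_le_of_norm_le_const fun t ht => (norm_eq_abs (h t)).trans_le (hC t ht)

lemma exists_abs_le (hc : Continuous h) (R : ℝ) :
    ∃ C, ∀ x ∈ Icc (-R) R, |hardyAverage h x| ≤ C := by
  obtain ⟨C, hC⟩ := (isCompact_Icc (a := -R) (b := R)).exists_bound_of_continuousOn hc.continuousOn
  refine ⟨max C 0, fun x hx => abs_le (le_max_right _ _) fun t ht => ?_⟩
  have h0 : (0:ℝ) ∈ Icc (-R) R := ⟨by linarith [hx.1, hx.2], by linarith [hx.1, hx.2]⟩
  exact (hC t (uIcc_subset_Icc h0 hx (uIoc_subset_uIcc ht))).trans (le_max_left _ _)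

lemma measurable (hc : Continuous h) : Measurable (hardyAverage h) :=
  (continuous_primitive (fun a b => hc.intervalIntegrable a b) 0).measurable.div measurable_id

lemma intervalIntegrable_pow (hc : Continuous h) {R : ℝ} (hR : 0 ≤ R) (n : ℕ) :
    IntervalIntegrable (fun x => hardyAverage h x ^ n) volume (-R) R := by
  obtain ⟨C, hC⟩ := exists_abs_le hc R
  refine (intervalIntegrable_const (c := C ^ n)).mono_fun'
    ((measurable hc).pow_const n).aestronglyMeasurable ?_
  refine (ae_restrict_iff' measurableSet_uIoc).2 (ae_of_all _ fun x hx => ?_)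
  rw [uIoc_of_le (by linarith)] at hx
  simp only [norm_pow, norm_eq_abs]
  exact pow_le_pow_left₀ (abs_nonneg _) (hC x (Ioc_subset_Icc_self hx)) n

lemma intervalIntegrable (hc : Continuous h) {R : ℝ} (hR : 0 ≤ R) :
    IntervalIntegrable (hardyAverage h) volume (-R) R := by
  simpa using intervalIntegrable_pow hc hR 1

lemma hasDerivAt_sq_primitive_div (hc : Continuous h) {x : ℝ} (hx : x ≠ 0) :
    HasDerivAt (fun y => (∫ t in (0:ℝ)..y, h t) ^ 2 / y)
      (2 * h x * hardyAverage h x - hardyAverage h x ^ 2) x := by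
  have hH := (hc.integral_hasStrictDerivAt 0 x).hasDerivAt
  refine ((hH.fun_pow 2).div (hasDerivAt_id' x) hx).congr_deriv ?_
  simp only [hardyAverage]
  field_simp
  ring

lemma continuous_sq_primitive_div (hc : Continuous h) :
    Continuous fun y => (∫ t in (0:ℝ)..y, h t) ^ 2 / y := by
  rw [continuous_iff_continuousAt]
  intro x
  rcases ne_or_eq x 0 with hx | rfl
  · exact (hasDerivAt_sq_primitive_div hc hx).continuousAt
  obtain ⟨C, hC⟩ := exists_abs_le hc 1
  have hsq : ∀ y, (∫ t in (0:ℝ)..y, h t) ^ 2 / y = y * hardyAverage h y ^ 2 := by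
    intro y
    rcases eq_or_ne y 0 with rfl | hy
    · simp
    · rw [hardyAverage]; field_simp
  simp only [ContinuousAt, hsq, zero_mul]
  have hlim : Tendsto (fun y : ℝ => |y| * C ^ 2) (𝓝 0) (𝓝 0) := by
    have hcont : Continuous fun y : ℝ => |y| * C ^ 2 := by fun_prop
    simpa using hcont.tendsto 0
  refine squeeze_zero_norm' ?_ hlim
  filter_upwards [Icc_mem_nhds (by norm_num : (-1:ℝ) < 0) (by norm_num : (0:ℝ) < 1)] with y hy
  rw [norm_mul, norm_pow, norm_eq_abs, norm_eq_abs]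
  gcongr
  exact hC y hy

theorem integral_sq_le (hc : Continuous h) {T : ℝ} (hT : 0 ≤ T) :
    ∫ x in (0:ℝ)..T, hardyAverage h x ^ 2 ≤ 4 * ∫ x in (0:ℝ)..T, h x ^ 2 := by
  have hsub : [[(0:ℝ), T]] ⊆ [[-T, T]] :=
    uIcc_subset_uIcc (mem_uIcc_of_le (by linarith) hT) right_mem_uIcc
  set F := hardyAverage h
  have hF := (intervalIntegrable hc hT).mono_set hsub
  have hF2 := (intervalIntegrable_pow hc hT 2).mono_set hsub
  have hh2 : IntervalIntegrable (fun x => h x ^ 2) volume 0 T := (hc.pow 2).intervalIntegrable _ _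
  have hlhs : IntervalIntegrable (fun x => 2 * h x * F x - F x ^ 2) volume 0 T :=
    (hF.continuousOn_mul (continuous_const.mul hc).continuousOn).sub hF2
  have hrhs : IntervalIntegrable (fun x => 2 * h x ^ 2 - F x ^ 2 / 2) volume 0 T :=
    (hh2.const_mul 2).sub (hF2.div_const 2)
  have hftc : 0 ≤ ∫ x in (0:ℝ)..T, (2 * h x * F x - F x ^ 2) := by
    rw [integral_eq_sub_of_hasDerivAt_of_le hT (continuous_sq_primitive_div hc).continuousOn
      (fun x hx => hasDerivAt_sq_primitive_div hc hx.1.ne') hlhs]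
    simp only [integral_same, div_zero, sub_zero]
    positivity
  have hamgm : ∫ x in (0:ℝ)..T, (2 * h x * F x - F x ^ 2) ≤
      ∫ x in (0:ℝ)..T, (2 * h x ^ 2 - F x ^ 2 / 2) :=
    integral_mono_on hT hlhs hrhs fun x _ => by nlinarith [sq_nonneg (2 * h x - F x)]
  rw [integral_sub (hh2.const_mul 2) (hF2.div_const 2), intervalIntegral.integral_const_mul,
    intervalIntegral.integral_div] at hamgm
  linarith

lemma comp_neg (x : ℝ) : hardyAverage (fun t => h (-t)) x = hardyAverage h (-x) := by
  simp only [hardyAverage, integral_comp_neg, neg_zero]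
  rw [integral_symm, neg_div, div_neg]

theorem integral_sq_le_two_sided (hc : Continuous h) {T : ℝ} (hT : 0 ≤ T) :
    ∫ x in (-T)..T, hardyAverage h x ^ 2 ≤ 4 * ∫ x in (-T)..T, h x ^ 2 := by
  have hleft : ∫ x in (-T)..0, hardyAverage h x ^ 2 ≤ 4 * ∫ x in (-T)..0, h x ^ 2 := by
    have := integral_sq_le (h := fun t => h (-t)) (by fun_prop) hT
    simpa only [comp_neg, integral_comp_neg (fun x => hardyAverage h x ^ 2),
      integral_comp_neg (fun x => h x ^ 2), neg_zero] using this
  have h0 : (0:ℝ) ∈ [[-T, T]] := mem_uIcc_of_le (by linarith) hT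
  have hF2 := intervalIntegrable_pow hc hT 2
  have hh2 : ∀ a b, IntervalIntegrable (fun x => h x ^ 2) volume a b :=
    fun a b => (hc.pow 2).intervalIntegrable a b
  rw [← integral_add_adjacent_intervals (hF2.mono_set (uIcc_subset_uIcc left_mem_uIcc h0))
      (hF2.mono_set (uIcc_subset_uIcc h0 right_mem_uIcc)),
    ← integral_add_adjacent_intervals (hh2 (-T) 0) (hh2 0 T)]
  linarith [integral_sq_le hc hT]

end hardyAverage

lemma Function.Periodic.intervalIntegral_comp_add_eq {E : Type*} [NormedAddCommGroup E]
    [NormedSpace ℝ E] {f : ℝ → E} {T : ℝ} (hf : Function.Periodic f T) (a b : ℝ) :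
    ∫ x in a..a + T, f (b + x) = ∫ x in (0:ℝ)..T, f x := by
  rw [integral_comp_add_left, ← add_assoc, hf.intervalIntegral_add_eq (b + a) 0, zero_add]

lemma dslope_eq_ite_div {𝕜 : Type*} [NontriviallyNormedField 𝕜] [DecidableEq 𝕜] (f : 𝕜 → 𝕜)
    (a b : 𝕜) : dslope f a b = if b = a then deriv f a else (f b - f a) / (b - a) := by
  split_ifs with h
  · rw [h, dslope_same]
  · rw [dslope_of_ne f h, slope_def_field]

section UnitCircle

open Complex

lemma periodic_exp_I_mul : Function.Periodic (fun t : ℝ => cexp (I * t)) (2 * π) := fun t => by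
  simpa [mul_comm] using exp_mul_I_periodic t

lemma hasDerivAt_exp_I_mul (t : ℝ) :
    HasDerivAt (fun s : ℝ => cexp (I * s)) (I * cexp (I * t)) t := by
  simpa [mul_comm] using ((hasDerivAt_id (t : ℂ)).const_mul I).cexp.comp_ofReal

lemma mul_abs_le_norm_exp_I_mul_sub_one {x : ℝ} (hx : |x| ≤ π) :
    2 / π * |x| ≤ ‖cexp (I * x) - 1‖ := by
  have hsin := Real.mul_abs_le_abs_sin (x := x / 2) (by rw [abs_div, abs_two]; linarith)
  rw [norm_exp_I_mul_ofReal_sub_one, norm_mul, norm_eq_abs, norm_eq_abs, abs_two,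
    abs_div, abs_two] at *
  linarith

lemma norm_exp_I_mul_add_sub (θ x : ℝ) :
    ‖cexp (I * ↑(θ + x)) - cexp (I * θ)‖ = ‖cexp (I * x) - 1‖ := by
  rw [ofReal_add, mul_add, Complex.exp_add, ← mul_sub_one, norm_mul, norm_exp_I_mul_ofReal,
    one_mul]

variable {Φ : ℂ → ℂ}

lemma norm_sub_le_abs_integral_norm_deriv (hd : ∀ t : ℝ, DifferentiableAt ℂ Φ (cexp (I * t)))
    (hc : Continuous fun t : ℝ => deriv Φ (cexp (I * t))) (a b : ℝ) :
    ‖Φ (cexp (I * b)) - Φ (cexp (I * a))‖ ≤ |∫ t in a..b, ‖deriv Φ (cexp (I * t))‖| := by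
  have hderiv : ∀ t ∈ [[a, b]], HasDerivAt (fun s : ℝ => Φ (cexp (I * s)))
      (deriv Φ (cexp (I * t)) * (I * cexp (I * t))) t :=
    fun t _ => (hd t).hasDerivAt.comp t (hasDerivAt_exp_I_mul t)
  rw [← integral_eq_sub_of_hasDerivAt hderiv ((hc.mul (by fun_prop)).intervalIntegrable a b)]
  refine norm_integral_le_abs_integral_norm.trans_eq ?_
  simp [norm_exp_I_mul_ofReal]

lemma norm_dslope_exp_I_mul_le (hd : ∀ t : ℝ, DifferentiableAt ℂ Φ (cexp (I * t)))
    (hc : Continuous fun t : ℝ => deriv Φ (cexp (I * t))) (θ : ℝ) {x : ℝ} (hx0 : x ≠ 0)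
    (hx : |x| ≤ π) :
    ‖dslope Φ (cexp (I * θ)) (cexp (I * ↑(θ + x)))‖ ≤
      π / 2 * |hardyAverage (fun t => ‖deriv Φ (cexp (I * ↑(θ + t)))‖) x| := by
  have hchord : 2 / π * |x| ≤ ‖cexp (I * ↑(θ + x)) - cexp (I * θ)‖ :=
    norm_exp_I_mul_add_sub θ x ▸ mul_abs_le_norm_exp_I_mul_sub_one hx
  have hpos : 0 < 2 / π * |x| := by have := pi_pos; positivity
  have hne : cexp (I * ↑(θ + x)) ≠ cexp (I * θ) := fun h => by
    rw [h, sub_self, norm_zero] at hchord; linarith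
  have hnum := norm_sub_le_abs_integral_norm_deriv hd hc θ (θ + x)
  have hshift := integral_comp_add_left (fun t => ‖deriv Φ (cexp (I * t))‖) θ (a := 0) (b := x)
  rw [add_zero] at hshift
  rw [← hshift] at hnum
  rw [dslope_of_ne _ hne, slope_def_field, norm_div, div_le_iff₀ (hpos.trans_le hchord),
    hardyAverage, abs_div]
  calc _ ≤ _ := hnum
    _ = π / 2 * (|∫ t in (0:ℝ)..x, ‖deriv Φ (cexp (I * ↑(θ + t)))‖| / |x|) * (2 / π * |x|) := by
        field_simp
    _ ≤ _ := by gcongr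

theorem integral_norm_dslope_exp_I_mul_sq_le (hd : ∀ t : ℝ, DifferentiableAt ℂ Φ (cexp (I * t)))
    (hc : Continuous fun t : ℝ => deriv Φ (cexp (I * t))) (θ : ℝ) :
    ∫ x in (-π)..π, ‖dslope Φ (cexp (I * θ)) (cexp (I * ↑(θ + x)))‖ ^ 2 ≤
      π ^ 2 * ∫ x in (-π)..π, ‖deriv Φ (cexp (I * ↑(θ + x)))‖ ^ 2 := by
  set g : ℝ → ℝ := fun t => ‖deriv Φ (cexp (I * ↑(θ + t)))‖
  have hg : Continuous g := (hc.comp (continuous_const_add θ)).norm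
  have hbound := (hardyAverage.intervalIntegrable_pow hg pi_pos.le 2).const_mul ((π / 2) ^ 2)
  rw [intervalIntegrable_iff_integrableOn_Ioc_of_le (by linarith [pi_pos])] at hbound
  calc ∫ x in (-π)..π, ‖dslope Φ (cexp (I * θ)) (cexp (I * ↑(θ + x)))‖ ^ 2
      ≤ ∫ x in (-π)..π, (π / 2) ^ 2 * hardyAverage g x ^ 2 := by
        rw [integral_of_le (by linarith [pi_pos]), integral_of_le (by linarith [pi_pos])]
        refine integral_mono_of_nonneg (ae_of_all _ fun _ => by positivity) hbound ?_
        filter_upwards [ae_restrict_mem measurableSet_Ioc, ae_restrict_of_ae (volume.ae_ne 0)]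
          with x hx hx0
        calc ‖dslope Φ (cexp (I * θ)) (cexp (I * ↑(θ + x)))‖ ^ 2
            ≤ (π / 2 * |hardyAverage g x|) ^ 2 := by
              gcongr
              exact norm_dslope_exp_I_mul_le hd hc θ hx0 (abs_le.2 ⟨hx.1.le, hx.2⟩)
          _ = (π / 2) ^ 2 * hardyAverage g x ^ 2 := by rw [mul_pow, sq_abs]
    _ = (π / 2) ^ 2 * ∫ x in (-π)..π, hardyAverage g x ^ 2 :=
        intervalIntegral.integral_const_mul _ _
    _ ≤ (π / 2) ^ 2 * (4 * ∫ x in (-π)..π, g x ^ 2) := by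
        gcongr
        exact hardyAverage.integral_sq_le_two_sided hg pi_pos.le
    _ = π ^ 2 * ∫ x in (-π)..π, g x ^ 2 := by ring

end UnitCircle

theorem boundary_difference_quotient_inequality_general (Φ : ℂ → ℂ) (U : Set ℂ) (hU : IsOpen U)
    (hsub : Metric.closedBall (0:ℂ) 1 ⊆ U) (hΦ : DifferentiableOn ℂ Φ U)
    (θ : ℝ) :
    (∫ ψ in (0:ℝ)..(2 * π),
        ‖if Complex.exp (Complex.I * (ψ : ℂ)) = Complex.exp (Complex.I * (θ : ℂ)) then
            deriv Φ (Complex.exp (Complex.I * (θ : ℂ)))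
          else
            (Φ (Complex.exp (Complex.I * (ψ : ℂ))) - Φ (Complex.exp (Complex.I * (θ : ℂ)))) /
              (Complex.exp (Complex.I * (ψ : ℂ)) - Complex.exp (Complex.I * (θ : ℂ)))‖ ^ 2)
      ≤ π ^ 2 * ∫ ψ in (0:ℝ)..(2 * π), ‖deriv Φ (Complex.exp (Complex.I * (ψ : ℂ)))‖ ^ 2 := by
  have hmem : ∀ t : ℝ, Complex.exp (Complex.I * t) ∈ U := fun t =>
    hsub (by simp [Complex.norm_exp_I_mul_ofReal])
  have hd : ∀ t : ℝ, DifferentiableAt ℂ Φ (Complex.exp (Complex.I * t)) := fun t =>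
    hΦ.differentiableAt (hU.mem_nhds (hmem t))
  have hc : Continuous fun t : ℝ => deriv Φ (Complex.exp (Complex.I * t)) :=
    (hΦ.analyticOnNhd hU).deriv.continuousOn.comp_continuous (by fun_prop) hmem
  simp only [← dslope_eq_ite_div]
  have hlhs := (periodic_exp_I_mul.comp fun w => ‖dslope Φ (Complex.exp (Complex.I * θ)) w‖ ^ 2)
    |>.intervalIntegral_comp_add_eq (-π) θ
  have hrhs := (periodic_exp_I_mul.comp fun w => ‖deriv Φ w‖ ^ 2)
    |>.intervalIntegral_comp_add_eq (-π) θ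
  have hπ : -π + 2 * π = π := by ring
  simp only [Function.comp_apply, hπ] at hlhs hrhs
  rw [← hlhs, ← hrhs]
  exact integral_norm_dslope_exp_I_mul_sq_le hd hc θ

/-- Boundary difference-quotient inequality:
`∫₀^{2π} |(Φ(e^{iψ}) − Φ(e^{iθ}))/(e^{iψ} − e^{iθ})|² dψ ≤ π² ∫₀^{2π} |Φ′(e^{iψ})|² dψ`. -/
theorem boundary_difference_quotient_inequality (Φ : ℂ → ℂ) (U : Set ℂ) (hU : IsOpen U)
    (hsub : Metric.closedBall (0:ℂ) 1 ⊆ U) (hΦ : DifferentiableOn ℂ Φ U)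
    (θ : ℝ) (hθ : θ ∈ Set.Ico (0:ℝ) (2 * π)) :
    (∫ ψ in (0:ℝ)..(2 * π),
        ‖if Complex.exp (Complex.I * (ψ : ℂ)) = Complex.exp (Complex.I * (θ : ℂ)) then
            deriv Φ (Complex.exp (Complex.I * (θ : ℂ)))
          else
            (Φ (Complex.exp (Complex.I * (ψ : ℂ))) - Φ (Complex.exp (Complex.I * (θ : ℂ)))) /
              (Complex.exp (Complex.I * (ψ : ℂ)) - Complex.exp (Complex.I * (θ : ℂ)))‖ ^ 2)
      ≤ π ^ 2 * ∫ ψ in (0:ℝ)..(2 * π), ‖deriv Φ (Complex.exp (Complex.I * (ψ : ℂ)))‖ ^ 2 :=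
  boundary_difference_quotient_inequality_general Φ U hU hsub hΦ θ
end

section
/- Let φ : [−π, π] → ℂ be continuously differentiable with φ(0) = 0. Then ∫_{−π}^{π} |φ(ψ)/(e^{iψ} − 1)|² dψ ≤ π² ∫_{−π}^{π} |φ′(ψ)|² dψ. -/
open MeasureTheory Real

/-!
On `[-π, π]` Jordan's inequality gives `|e^{iψ} - 1| = 2 |sin (ψ / 2)| ≥ 2 |ψ| / π`, so it suffices
to prove `∫ |φ ψ|² / ψ² ≤ 4 ∫ |φ'|²`. Splitting at `0` and reflecting, and using
`|φ x| ≤ ∫₀ˣ |φ'|`, this reduces to Hardy's inequality `∫₀ᵇ (∫₀ˣ g)² / x² dx ≤ 4 ∫₀ᵇ g²` for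
`g ≥ 0`. Cauchy–Schwarz against the weight `t^(-1/2)` gives `(∫₀ˣ g)² ≤ 2 √x ∫₀ˣ √t g(t)² dt`;
after exchanging the order of integration, the weight is cancelled by
`∫ₜ^∞ x^(-3/2) dx = 2 t^(-1/2)`. Working in `ℝ≥0∞` avoids all integrability side conditions,
in particular at `ψ = 0`.
-/

open Set
open scoped ENNReal

theorem lintegral_mul_sq_le {α : Type*} [MeasurableSpace α] (μ : Measure α) {f g : α → ℝ≥0∞}
    (hf : AEMeasurable f μ) (hg : AEMeasurable g μ) :
    (∫⁻ a, f a * g a ∂μ) ^ 2 ≤ (∫⁻ a, f a ^ 2 ∂μ) * ∫⁻ a, g a ^ 2 ∂μ := by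
  have hsq : ∀ A : ℝ≥0∞, (A ^ (1 / 2 : ℝ)) ^ 2 = A := fun A => by
    rw [← ENNReal.rpow_natCast, ← ENNReal.rpow_mul]; norm_num
  have hholder := ENNReal.lintegral_mul_le_Lp_mul_Lq μ Real.HolderConjugate.two_two hf hg
  simp only [ENNReal.rpow_two] at hholder
  calc (∫⁻ a, f a * g a ∂μ) ^ 2 ≤ _ := pow_le_pow_left' hholder 2
    _ = _ := by rw [mul_pow, hsq, hsq]

theorem ofReal_rpow_neg_mul_ofReal_rpow {t : ℝ} (ht : 0 < t) (r : ℝ) :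
    ENNReal.ofReal (t ^ (-r)) * ENNReal.ofReal (t ^ r) = 1 := by
  rw [← ENNReal.ofReal_mul (rpow_nonneg ht.le _), ← rpow_add ht, neg_add_cancel, rpow_zero,
    ENNReal.ofReal_one]

theorem ofReal_rpow_half_div_sq {x : ℝ} (hx : 0 < x) :
    ENNReal.ofReal (x ^ (1 / 2 : ℝ)) / ENNReal.ofReal x ^ 2 =
      ENNReal.ofReal (x ^ (-(3 / 2) : ℝ)) := by
  rw [← ENNReal.ofReal_pow hx.le, ← ENNReal.ofReal_div_of_pos (by positivity), ← rpow_natCast,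
    ← rpow_sub hx]
  norm_num

theorem lintegral_Ioc_rpow_neg_half {x : ℝ} (hx : 0 ≤ x) :
    ∫⁻ t in Ioc 0 x, ENNReal.ofReal (t ^ (-(1 / 2) : ℝ)) =
      2 * ENNReal.ofReal (x ^ (1 / 2 : ℝ)) := by
  rw [← ofReal_integral_eq_lintegral_ofReal
      (intervalIntegral.intervalIntegrable_rpow' (by norm_num)).1
      ((ae_restrict_mem measurableSet_Ioc).mono fun t ht => rpow_nonneg ht.1.le _),
    ← intervalIntegral.integral_of_le hx, integral_rpow (Or.inl (by norm_num))]
  norm_num [zero_rpow]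
  rw [div_div_eq_mul_div, div_one, mul_comm, ENNReal.ofReal_mul zero_le_two, ENNReal.ofReal_ofNat]

theorem lintegral_Icc_rpow_neg_three_halves_le {t : ℝ} (ht : 0 < t) (b : ℝ) :
    ∫⁻ x in Icc t b, ENNReal.ofReal (x ^ (-(3 / 2) : ℝ)) ≤
      2 * ENNReal.ofReal (t ^ (-(1 / 2) : ℝ)) := by
  calc ∫⁻ x in Icc t b, ENNReal.ofReal (x ^ (-(3 / 2) : ℝ))
      ≤ ∫⁻ x in Ioi t, ENNReal.ofReal (x ^ (-(3 / 2) : ℝ)) := by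
        rw [Measure.restrict_congr_set Ioi_ae_eq_Ici]
        exact lintegral_mono_set Icc_subset_Ici_self
    _ = 2 * ENNReal.ofReal (t ^ (-(1 / 2) : ℝ)) := by
        rw [← ofReal_integral_eq_lintegral_ofReal (integrableOn_Ioi_rpow_of_lt (by norm_num) ht)
            ((ae_restrict_mem measurableSet_Ioi).mono fun x hx => rpow_nonneg (ht.trans hx).le _),
          integral_Ioi_rpow_of_lt (by norm_num) ht]
        norm_num
        rw [div_div_eq_mul_div, div_one, mul_comm, ENNReal.ofReal_mul zero_le_two,
          ENNReal.ofReal_ofNat]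

theorem sq_lintegral_Ioc_le {x : ℝ} (hx : 0 ≤ x) {g : ℝ → ℝ≥0∞}
    (hg : AEMeasurable g (volume.restrict (Ioc 0 x))) :
    (∫⁻ t in Ioc 0 x, g t) ^ 2 ≤
      2 * ENNReal.ofReal (x ^ (1 / 2 : ℝ)) *
        ∫⁻ t in Ioc 0 x, ENNReal.ofReal (t ^ (1 / 2 : ℝ)) * g t ^ 2 := by
  have hsplit : ∀ᵐ t ∂volume.restrict (Ioc 0 x),
      g t = ENNReal.ofReal (t ^ (-(1 / 4) : ℝ)) * (ENNReal.ofReal (t ^ (1 / 4 : ℝ)) * g t) := by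
    filter_upwards [ae_restrict_mem measurableSet_Ioc] with t ht
    rw [← mul_assoc, ofReal_rpow_neg_mul_ofReal_rpow ht.1, one_mul]
  have hsq : ∀ t ∈ Ioc (0 : ℝ) x, ∀ r : ℝ,
      ENNReal.ofReal (t ^ r) ^ 2 = ENNReal.ofReal (t ^ (2 * r)) := by
    intro t ht r
    rw [← ENNReal.ofReal_pow (rpow_nonneg ht.1.le _), ← rpow_natCast, ← rpow_mul ht.1.le, mul_comm]
    norm_num
  rw [lintegral_congr_ae hsplit, ← lintegral_Ioc_rpow_neg_half hx]
  refine (lintegral_mul_sq_le _ (by fun_prop) (by fun_prop)).trans_eq ?_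
  congr 1
  · refine setLIntegral_congr_fun measurableSet_Ioc fun t ht => ?_
    rw [hsq t ht]; norm_num
  · refine setLIntegral_congr_fun measurableSet_Ioc fun t ht => ?_
    rw [mul_pow, hsq t ht]; norm_num

theorem lintegral_Ioc_lintegral_Ioc_swap {a b : ℝ} {F : ℝ → ℝ → ℝ≥0∞}
    (hF : AEMeasurable (Function.uncurry F)
      ((volume.restrict (Ioc a b)).prod (volume.restrict (Ioc a b)))) :
    ∫⁻ x in Ioc a b, ∫⁻ t in Ioc a x, F x t = ∫⁻ t in Ioc a b, ∫⁻ x in Icc t b, F x t := by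
  set G : ℝ → ℝ → ℝ≥0∞ := fun x t =>
    {p : ℝ × ℝ | p.2 ≤ p.1}.indicator (Function.uncurry F) (x, t)
  have hG : AEMeasurable (Function.uncurry G)
      ((volume.restrict (Ioc a b)).prod (volume.restrict (Ioc a b))) :=
    hF.indicator (measurableSet_le measurable_snd measurable_fst)
  have hleft : ∀ x ∈ Ioc a b, ∫⁻ t in Ioc a x, F x t = ∫⁻ t in Ioc a b, G x t := by
    intro x hx
    have hGx : G x = (Iic x).indicator (F x) := funext fun t => by simp [G, indicator_apply]
    rw [hGx, lintegral_indicator measurableSet_Iic, Measure.restrict_restrict measurableSet_Iic,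
      Iic_inter_Ioc_of_le hx.2]
  have hright : ∀ t ∈ Ioc a b, ∫⁻ x in Icc t b, F x t = ∫⁻ x in Ioc a b, G x t := by
    intro t ht
    have hGt : (G · t) = (Ici t).indicator (F · t) := funext fun x => by simp [G, indicator_apply]
    rw [hGt, lintegral_indicator measurableSet_Ici, Measure.restrict_restrict measurableSet_Ici,
      show Ici t ∩ Ioc a b = Icc t b from
        ext fun x => ⟨fun h => ⟨h.1, h.2.2⟩, fun h => ⟨h.1, ht.1.trans_le h.1, h.2⟩⟩]
  rw [setLIntegral_congr_fun measurableSet_Ioc hleft,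
    setLIntegral_congr_fun measurableSet_Ioc hright]
  exact lintegral_lintegral_swap hG

theorem hardy_lintegral_Ioc {b : ℝ} {g : ℝ → ℝ≥0∞}
    (hg : AEMeasurable g (volume.restrict (Ioc 0 b))) :
    ∫⁻ x in Ioc 0 b, (∫⁻ t in Ioc 0 x, g t) ^ 2 / ENNReal.ofReal x ^ 2 ≤
      4 * ∫⁻ t in Ioc 0 b, g t ^ 2 := by
  set k : ℝ → ℝ≥0∞ := fun t => ENNReal.ofReal (t ^ (1 / 2 : ℝ)) * g t ^ 2
  have hk : AEMeasurable k (volume.restrict (Ioc 0 b)) := by fun_prop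
  have hpointwise : ∀ x ∈ Ioc 0 b, (∫⁻ t in Ioc 0 x, g t) ^ 2 / ENNReal.ofReal x ^ 2 ≤
      2 * ∫⁻ t in Ioc 0 x, ENNReal.ofReal (x ^ (-(3 / 2) : ℝ)) * k t := by
    intro x hx
    have hgx : AEMeasurable g (volume.restrict (Ioc 0 x)) :=
      hg.mono_measure (Measure.restrict_mono (Ioc_subset_Ioc_right hx.2) le_rfl)
    rw [lintegral_const_mul' _ _ ENNReal.ofReal_ne_top, ← ofReal_rpow_half_div_sq hx.1]
    calc (∫⁻ t in Ioc 0 x, g t) ^ 2 / ENNReal.ofReal x ^ 2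
        ≤ 2 * ENNReal.ofReal (x ^ (1 / 2 : ℝ)) * (∫⁻ t in Ioc 0 x, k t) / ENNReal.ofReal x ^ 2 :=
          ENNReal.div_le_div_right (sq_lintegral_Ioc_le hx.1.le hgx) _
      _ = _ := by simp only [div_eq_mul_inv]; ring
  calc ∫⁻ x in Ioc 0 b, (∫⁻ t in Ioc 0 x, g t) ^ 2 / ENNReal.ofReal x ^ 2
      ≤ ∫⁻ x in Ioc 0 b, 2 * ∫⁻ t in Ioc 0 x, ENNReal.ofReal (x ^ (-(3 / 2) : ℝ)) * k t :=
        setLIntegral_mono' measurableSet_Ioc hpointwise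
    _ = 2 * ∫⁻ t in Ioc 0 b, (∫⁻ x in Icc t b, ENNReal.ofReal (x ^ (-(3 / 2) : ℝ))) * k t := by
        rw [lintegral_const_mul' _ _ ENNReal.ofNat_ne_top,
          lintegral_Ioc_lintegral_Ioc_swap
            (F := fun x t => ENNReal.ofReal (x ^ (-(3 / 2) : ℝ)) * k t)
            ((measurable_fst.pow_const _).ennreal_ofReal.aemeasurable.mul hk.comp_snd)]
        exact congrArg (2 * ·) (lintegral_congr fun t => lintegral_mul_const _ (by fun_prop))
    _ ≤ 2 * ∫⁻ t in Ioc 0 b, 2 * ENNReal.ofReal (t ^ (-(1 / 2) : ℝ)) * k t := by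
        refine mul_le_mul_right (setLIntegral_mono' measurableSet_Ioc fun t ht => ?_) 2
        exact mul_le_mul_left (lintegral_Icc_rpow_neg_three_halves_le ht.1 b) _
    _ = 2 * ∫⁻ t in Ioc 0 b, 2 * g t ^ 2 := by
        refine congrArg (2 * ·) (setLIntegral_congr_fun measurableSet_Ioc fun t ht => ?_)
        simp only [k, mul_assoc, ← mul_assoc (ENNReal.ofReal _),
          ofReal_rpow_neg_mul_ofReal_rpow ht.1, one_mul]
    _ = 4 * ∫⁻ t in Ioc 0 b, g t ^ 2 := by
        rw [lintegral_const_mul' _ _ ENNReal.ofNat_ne_top, ← mul_assoc]; norm_num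

theorem lintegral_Ioc_neg_eq_add {b : ℝ} (hb : 0 ≤ b) (f : ℝ → ℝ≥0∞) :
    ∫⁻ x in Ioc (-b) b, f x = (∫⁻ x in Ioc 0 b, f (-x)) + ∫⁻ x in Ioc 0 b, f x := by
  have hneg : ∫⁻ x in Ioc (-b) 0, f x = ∫⁻ x in Ioc 0 b, f (-x) := by
    rw [← (Measure.measurePreserving_neg volume).setLIntegral_comp_preimage_emb
      measurableEmbedding_neg, Measure.restrict_congr_set Ico_ae_eq_Ioc.symm]
    simp
  rw [← Ioc_union_Ioc_eq_Ioc (neg_nonpos.2 hb) hb,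
    lintegral_union measurableSet_Ioc (Ioc_disjoint_Ioc_of_le le_rfl), hneg]

section

variable {E : Type*} [NormedAddCommGroup E] [NormedSpace ℝ E] [CompleteSpace E]

theorem hardy_Ioc_of_hasDerivAt {f f' : ℝ → E} {b : ℝ} (hf0 : f 0 = 0)
    (hf : ContinuousOn f (Icc 0 b)) (hderiv : ∀ x ∈ Ioo 0 b, HasDerivAt f (f' x) x)
    (hf' : IntegrableOn f' (Ioc 0 b)) :
    ∫⁻ x in Ioc 0 b, ‖f x‖ₑ ^ 2 / ‖x‖ₑ ^ 2 ≤ 4 * ∫⁻ x in Ioc 0 b, ‖f' x‖ₑ ^ 2 := by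
  have hbound : ∀ x ∈ Ioc 0 b, ‖f x‖ₑ ≤ ∫⁻ t in Ioc 0 x, ‖f' t‖ₑ := by
    intro x hx
    have hftc := intervalIntegral.integral_eq_sub_of_hasDerivAt_of_le hx.1.le
      (hf.mono (Icc_subset_Icc_right hx.2)) (fun t ht => hderiv t ⟨ht.1, ht.2.trans_le hx.2⟩)
      ((intervalIntegrable_iff_integrableOn_Ioc_of_le hx.1.le).2
        (hf'.mono_set (Ioc_subset_Ioc_right hx.2)))
    rw [hf0, sub_zero, intervalIntegral.integral_of_le hx.1.le] at hftc
    exact hftc ▸ enorm_integral_le_lintegral_enorm _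
  calc ∫⁻ x in Ioc 0 b, ‖f x‖ₑ ^ 2 / ‖x‖ₑ ^ 2
      ≤ ∫⁻ x in Ioc 0 b, (∫⁻ t in Ioc 0 x, ‖f' t‖ₑ) ^ 2 / ENNReal.ofReal x ^ 2 :=
        setLIntegral_mono' measurableSet_Ioc fun x hx => by
          rw [Real.enorm_eq_ofReal hx.1.le]; gcongr; exact hbound x hx
    _ ≤ 4 * ∫⁻ x in Ioc 0 b, ‖f' x‖ₑ ^ 2 := hardy_lintegral_Ioc hf'.aestronglyMeasurable.enorm

theorem hardy_Ioc_neg_of_contDiffOn {f : ℝ → E} {b : ℝ} (hb : 0 < b)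
    (hf : ContDiffOn ℝ 1 f (Icc (-b) b)) (hf0 : f 0 = 0) :
    ∫⁻ x in Ioc (-b) b, ‖f x‖ₑ ^ 2 / ‖x‖ₑ ^ 2 ≤
      4 * ∫⁻ x in Ioc (-b) b, ‖derivWithin f (Icc (-b) b) x‖ₑ ^ 2 := by
  set D := derivWithin f (Icc (-b) b)
  have hderiv : ∀ x ∈ Ioo (-b) b, HasDerivAt f (D x) x := fun x hx =>
    (hf.differentiableOn one_ne_zero x (Ioo_subset_Icc_self hx)).hasDerivWithinAt.hasDerivAt
      (Icc_mem_nhds hx.1 hx.2)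
  have hD : ContinuousOn D (Icc (-b) b) :=
    hf.continuousOn_derivWithin (uniqueDiffOn_Icc (neg_lt_self hb)) le_rfl
  have hpos : Icc 0 b ⊆ Icc (-b) b := Icc_subset_Icc_left (neg_nonpos.2 hb.le)
  have hmaps : MapsTo (fun x => -x) (Icc 0 b) (Icc (-b) b) := fun x hx =>
    ⟨neg_le_neg hx.2, by linarith [hx.1]⟩
  have hleft : ∫⁻ x in Ioc 0 b, ‖f (-x)‖ₑ ^ 2 / ‖x‖ₑ ^ 2 ≤
      4 * ∫⁻ x in Ioc 0 b, ‖D (-x)‖ₑ ^ 2 := by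
    simpa using hardy_Ioc_of_hasDerivAt (f := fun x => f (-x)) (f' := fun x => -D (-x))
      (by simpa using hf0) (hf.continuousOn.comp continuous_neg.continuousOn hmaps)
      (fun x hx => by
        simpa [Function.comp_def] using
          (hderiv (-x) ⟨by linarith [hx.2], by linarith [hx.1]⟩).scomp x (hasDerivAt_neg x))
      ((hD.comp continuous_neg.continuousOn hmaps).neg.integrableOn_Icc.mono_set
        Ioc_subset_Icc_self)
  rw [lintegral_Ioc_neg_eq_add hb.le, lintegral_Ioc_neg_eq_add hb.le, mul_add]
  simp only [enorm_neg]
  exact add_le_add hleft (hardy_Ioc_of_hasDerivAt hf0 (hf.continuousOn.mono hpos)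
    (fun x hx => hderiv x ⟨by linarith [hx.1], hx.2⟩)
    ((hD.mono hpos).integrableOn_Icc.mono_set Ioc_subset_Icc_self))

end

theorem two_div_pi_mul_abs_le_norm_exp_I_mul_sub_one {ψ : ℝ} (hψ : |ψ| ≤ π) :
    2 / π * |ψ| ≤ ‖Complex.exp (Complex.I * ψ) - 1‖ := by
  have hsin := mul_abs_le_abs_sin (x := ψ / 2) (by rw [abs_div, abs_two]; linarith)
  rw [abs_div, abs_two] at hsin
  rw [Complex.norm_exp_I_mul_ofReal_sub_one, norm_mul, Real.norm_eq_abs, Real.norm_eq_abs, abs_two]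
  linarith

theorem enorm_div_exp_I_mul_sub_one_sq_le (z : ℂ) {ψ : ℝ} (hψ : |ψ| ≤ π) :
    ‖z / (Complex.exp (Complex.I * ψ) - 1)‖ₑ ^ 2 ≤
      ENNReal.ofReal (π ^ 2 / 4) * (‖z‖ₑ ^ 2 / ‖ψ‖ₑ ^ 2) := by
  rcases eq_or_ne ψ 0 with rfl | hψ0
  · simp -- the left side is `‖z / 0‖ₑ ^ 2 = 0`
  have hψpos : 0 < |ψ| := abs_pos.2 hψ0
  have hreal : ‖z / (Complex.exp (Complex.I * ψ) - 1)‖ ^ 2 ≤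
      π ^ 2 / 4 * (‖z‖ ^ 2 / |ψ| ^ 2) := by
    rw [norm_div, div_pow]
    calc ‖z‖ ^ 2 / ‖Complex.exp (Complex.I * ψ) - 1‖ ^ 2 ≤ ‖z‖ ^ 2 / (2 / π * |ψ|) ^ 2 := by
          gcongr; exact two_div_pi_mul_abs_le_norm_exp_I_mul_sub_one hψ
      _ = π ^ 2 / 4 * (‖z‖ ^ 2 / |ψ| ^ 2) := by field_simp; ring
  rw [← ofReal_norm, ← ofReal_norm, Real.enorm_eq_ofReal_abs,
    ← ENNReal.ofReal_pow (norm_nonneg _), ← ENNReal.ofReal_pow (norm_nonneg _),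
    ← ENNReal.ofReal_pow (abs_nonneg _),
    ← ENNReal.ofReal_div_of_pos (by positivity), ← ENNReal.ofReal_mul (by positivity)]
  exact ENNReal.ofReal_le_ofReal hreal

theorem lintegral_enorm_div_exp_I_mul_sub_one_sq_le {φ : ℝ → ℂ}
    (hφ : ContDiffOn ℝ 1 φ (Icc (-π) π)) (h0 : φ 0 = 0) :
    ∫⁻ ψ in Ioc (-π) π, ‖φ ψ / (Complex.exp (Complex.I * ψ) - 1)‖ₑ ^ 2 ≤
      ENNReal.ofReal (π ^ 2) * ∫⁻ ψ in Ioc (-π) π, ‖derivWithin φ (Icc (-π) π) ψ‖ₑ ^ 2 :=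
  calc ∫⁻ ψ in Ioc (-π) π, ‖φ ψ / (Complex.exp (Complex.I * ψ) - 1)‖ₑ ^ 2
      ≤ ∫⁻ ψ in Ioc (-π) π, ENNReal.ofReal (π ^ 2 / 4) * (‖φ ψ‖ₑ ^ 2 / ‖ψ‖ₑ ^ 2) :=
        setLIntegral_mono' measurableSet_Ioc fun ψ hψ =>
          enorm_div_exp_I_mul_sub_one_sq_le _ (abs_le.2 ⟨hψ.1.le, hψ.2⟩)
    _ ≤ ENNReal.ofReal (π ^ 2 / 4) *
          (4 * ∫⁻ ψ in Ioc (-π) π, ‖derivWithin φ (Icc (-π) π) ψ‖ₑ ^ 2) := by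
        rw [lintegral_const_mul' _ _ ENNReal.ofReal_ne_top]
        gcongr
        exact hardy_Ioc_neg_of_contDiffOn pi_pos hφ h0
    _ = ENNReal.ofReal (π ^ 2) * ∫⁻ ψ in Ioc (-π) π, ‖derivWithin φ (Icc (-π) π) ψ‖ₑ ^ 2 := by
        rw [← mul_assoc, ← ENNReal.ofReal_ofNat 4, ← ENNReal.ofReal_mul (by positivity),
          div_mul_cancel₀ _ four_ne_zero]

theorem integral_norm_sq_eq_toReal_lintegral {α F : Type*} [MeasurableSpace α] {μ : Measure α}
    [NormedAddCommGroup F] {f : α → F} (hf : AEStronglyMeasurable f μ) :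
    ∫ x, ‖f x‖ ^ 2 ∂μ = (∫⁻ x, ‖f x‖ₑ ^ 2 ∂μ).toReal := by
  rw [integral_eq_lintegral_of_nonneg_ae (f := fun x => ‖f x‖ ^ 2)
    (ae_of_all _ fun x => by positivity) (hf.norm.pow 2)]
  simp_rw [ENNReal.ofReal_pow (norm_nonneg _), ofReal_norm]

theorem integral_norm_sq_le_of_lintegral_enorm_sq_le {α F G : Type*} [MeasurableSpace α]
    {μ : Measure α} [NormedAddCommGroup F] [NormedAddCommGroup G] {f : α → F} {g : α → G}
    {c : ℝ} (hc : 0 ≤ c) (hf : AEStronglyMeasurable f μ) (hg : AEStronglyMeasurable g μ)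
    (hg_fin : ∫⁻ x, ‖g x‖ₑ ^ 2 ∂μ ≠ ⊤)
    (h : ∫⁻ x, ‖f x‖ₑ ^ 2 ∂μ ≤ ENNReal.ofReal c * ∫⁻ x, ‖g x‖ₑ ^ 2 ∂μ) :
    ∫ x, ‖f x‖ ^ 2 ∂μ ≤ c * ∫ x, ‖g x‖ ^ 2 ∂μ := by
  rw [integral_norm_sq_eq_toReal_lintegral hf, integral_norm_sq_eq_toReal_lintegral hg,
    ← ENNReal.toReal_ofReal hc, ← ENNReal.toReal_mul]
  exact ENNReal.toReal_mono (ENNReal.mul_ne_top ENNReal.ofReal_ne_top hg_fin) h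

/-- Hardy inequality on `[−π,π]`: for `φ` continuously differentiable
with `φ(0) = 0`, `∫_{−π}^{π} |φ(ψ)/(e^{iψ} − 1)|² dψ ≤ π² ∫_{−π}^{π} |φ′(ψ)|² dψ`. -/
theorem hardy_inequality_interval (φ : ℝ → ℂ)
    (hφ : ContDiffOn ℝ 1 φ (Set.Icc (-π) π)) (h0 : φ 0 = 0) :
    (∫ ψ in (-π)..π, ‖φ ψ / (Complex.exp (Complex.I * (ψ : ℂ)) - 1)‖ ^ 2)
      ≤ π ^ 2 * ∫ ψ in (-π)..π, ‖derivWithin φ (Set.Icc (-π) π) ψ‖ ^ 2 := by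
  have hD : ContinuousOn (derivWithin φ (Icc (-π) π)) (Icc (-π) π) :=
    hφ.continuousOn_derivWithin (uniqueDiffOn_Icc (neg_lt_self pi_pos)) le_rfl
  have hD_fin : ∫⁻ ψ in Ioc (-π) π, ‖derivWithin φ (Icc (-π) π) ψ‖ₑ ^ 2 ≠ ⊤ := by
    simpa using ((hD.norm.pow 2).integrableOn_Icc.mono_set Ioc_subset_Icc_self).2.ne
  have hφ_meas : AEStronglyMeasurable φ (volume.restrict (Ioc (-π) π)) :=
    (hφ.continuousOn.mono Ioc_subset_Icc_self).aestronglyMeasurable measurableSet_Ioc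
  rw [intervalIntegral.integral_of_le (neg_le_self pi_pos.le),
    intervalIntegral.integral_of_le (neg_le_self pi_pos.le)]
  exact integral_norm_sq_le_of_lintegral_enorm_sq_le (sq_nonneg π)
    (hφ_meas.aemeasurable.div (by fun_prop)).aestronglyMeasurable
    ((hD.mono Ioc_subset_Icc_self).aestronglyMeasurable measurableSet_Ioc) hD_fin
    (lintegral_enorm_div_exp_I_mul_sub_one_sq_le hφ h0)
end

section
/- Let Q be holomorphic on an open neighborhood of the closed unit disc. Then ∫₀^{2π} conj(Q(e^{iψ})) · (d/dψ)[Q(e^{iψ})] dψ = 2i ∬_𝔻 |Q′(w)|² dA(w), where dA is Lebesgue area measure on the open unit disc 𝔻. -/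
/-!
Write `Q_r` and `Q_θ` for the partial derivatives of `Q (r e^{iθ})`; holomorphy gives the polar
Cauchy–Riemann equation `Q_θ = i r Q_r`. Since the mixed partials agree,
`∂_r (conj Q · Q_θ) - ∂_θ (conj Q · Q_r) = conj Q_r · Q_θ - conj Q_θ · Q_r = 2 i r |Q'|²`.
Integrate over `0 ≤ r ≤ 1`, `0 ≤ θ ≤ 2π`: the `r`-integral of the first term is the boundary
integrand (it vanishes at `r = 0`), the `θ`-integral of the exact `θ`-derivative vanishes by
periodicity, and `∫∫ r |Q'|² dr dθ` is the area integral in polar coordinates.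
-/

open MeasureTheory Real

open Complex Metric Set Function ComplexConjugate

theorem hasDerivAt_circleMap_radius (c : ℂ) (r θ : ℝ) :
    HasDerivAt (fun s : ℝ => circleMap c s θ) (circleMap 0 1 θ) r := by
  simpa [circleMap] using (ofRealCLM.hasDerivAt (x := r)).mul_const (exp (θ * I)) |>.const_add c

theorem continuous_uncurry_circleMap (c : ℂ) : Continuous (uncurry (circleMap c)) := by
  unfold circleMap; fun_prop

theorem circleMap_zero_eq_mul (r θ : ℝ) : circleMap 0 r θ = r * circleMap 0 1 θ := by
  simp [circleMap]

theorem circleMap_mem_closedBall_of_mem_Icc {r R : ℝ} (hr : r ∈ Icc 0 R) (θ : ℝ) :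
    circleMap 0 r θ ∈ closedBall 0 R :=
  closedBall_subset_closedBall hr.2 (circleMap_mem_closedBall 0 hr.1 θ)

theorem ContinuousOn.comp_uncurry_circleMap {E : Type*} [TopologicalSpace E] {F : ℂ → E} {R : ℝ}
    (hF : ContinuousOn F (closedBall 0 R)) :
    ContinuousOn (fun p : ℝ × ℝ => F (circleMap 0 p.1 p.2)) (Icc 0 R ×ˢ univ) :=
  hF.comp (continuous_uncurry_circleMap 0).continuousOn fun p hp =>
    circleMap_mem_closedBall_of_mem_Icc hp.1 p.2

theorem polarCoord_symm_eq_circleMap (p : ℝ × ℝ) :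
    Complex.polarCoord.symm p = circleMap 0 p.1 p.2 := by
  simp [circleMap, exp_mul_I]

theorem Function.Periodic.setIntegral_Ioo_neg_pi_pi {E : Type*} [NormedAddCommGroup E]
    [NormedSpace ℝ E] {f : ℝ → E} (hf : Periodic f (2 * π)) :
    ∫ θ in Ioo (-π) π, f θ = ∫ θ in 0..2 * π, f θ := by
  have := hf.intervalIntegral_add_eq (-π) 0
  rw [show -π + 2 * π = π by ring, zero_add] at this
  rw [← this, intervalIntegral.integral_of_le (by linarith [pi_pos]), integral_Ioc_eq_integral_Ioo]

theorem setIntegral_ball_eq_intervalIntegral_circleMap {E : Type*} [NormedAddCommGroup E]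
    [NormedSpace ℝ E] {f : ℂ → E} {R : ℝ} (hR : 0 ≤ R) (hf : ContinuousOn f (closedBall 0 R)) :
    ∫ z in ball 0 R, f z = ∫ r in 0..R, r • ∫ θ in 0..2 * π, f (circleMap 0 r θ) := by
  set g : ℝ × ℝ → E := fun p => p.1 • f (circleMap 0 p.1 p.2)
  have hind : EqOn (fun p => p.1 • (ball 0 R).indicator f (Complex.polarCoord.symm p))
      ((Ioo 0 R ×ˢ Ioo (-π) π).indicator g) polarCoord.target := by
    rintro ⟨r, θ⟩ ⟨hr : 0 < r, hθ⟩
    have hmem : circleMap 0 r θ ∈ ball 0 R ↔ (r, θ) ∈ Ioo 0 R ×ˢ Ioo (-π) π := by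
      simp [abs_of_pos hr, hr, hθ]
    simp only [polarCoord_symm_eq_circleMap, indicator, hmem]
    split_ifs <;> simp [g]
  have hint : IntegrableOn g (Ioo 0 R ×ˢ Ioo (-π) π) := by
    refine (ContinuousOn.integrableOn_compact (isCompact_Icc.prod isCompact_Icc) ?_).mono_set
      (prod_mono Ioo_subset_Icc_self Ioo_subset_Icc_self)
    exact continuous_fst.continuousOn.smul (hf.comp_uncurry_circleMap.mono
      (prod_mono subset_rfl (subset_univ _)))
  calc ∫ z in ball 0 R, f z
      = ∫ p in polarCoord.target, p.1 • (ball 0 R).indicator f (Complex.polarCoord.symm p) := by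
        rw [Complex.integral_comp_polarCoord_symm, integral_indicator measurableSet_ball]
    _ = ∫ p in polarCoord.target, (Ioo 0 R ×ˢ Ioo (-π) π).indicator g p :=
        setIntegral_congr_fun polarCoord.open_target.measurableSet hind
    _ = ∫ p in Ioo 0 R ×ˢ Ioo (-π) π, g p := by
        rw [setIntegral_indicator (measurableSet_Ioo.prod measurableSet_Ioo), polarCoord_target,
          inter_eq_self_of_subset_right (prod_mono Ioo_subset_Ioi_self subset_rfl)]
    _ = ∫ r in Ioo 0 R, ∫ θ in Ioo (-π) π, r • f (circleMap 0 r θ) := by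
        rw [Measure.volume_eq_prod, setIntegral_prod _ (by rwa [← Measure.volume_eq_prod])]
    _ = ∫ r in 0..R, r • ∫ θ in 0..2 * π, f (circleMap 0 r θ) := by
        rw [intervalIntegral.integral_of_le hR, integral_Ioc_eq_integral_Ioo]
        refine setIntegral_congr_fun measurableSet_Ioo fun r _ => ?_
        rw [integral_smul, Periodic.setIntegral_Ioo_neg_pi_pi fun θ => by
          simp only [periodic_circleMap 0 r θ]]

/-- With `F' = deriv F`, these are `∂_r`, `∂_θ` and `∂_r ∂_θ = ∂_θ ∂_r` of `F (r e^{iθ})` for `F`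
holomorphic near `r e^{iθ}`. -/
noncomputable def radialDeriv (F : ℂ → ℂ) (r θ : ℝ) : ℂ :=
  deriv F (circleMap 0 r θ) * circleMap 0 1 θ

noncomputable def angularDeriv (F : ℂ → ℂ) (r θ : ℝ) : ℂ :=
  deriv F (circleMap 0 r θ) * (circleMap 0 r θ * I)

noncomputable def mixedDeriv (F : ℂ → ℂ) (r θ : ℝ) : ℂ :=
  I * (radialDeriv F r θ + r * radialDeriv (deriv F) r θ * circleMap 0 1 θ)

theorem angularDeriv_eq (F : ℂ → ℂ) (r θ : ℝ) :
    angularDeriv F r θ = I * r * radialDeriv F r θ := by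
  rw [angularDeriv, radialDeriv, circleMap_zero_eq_mul r]; ring

section Derivatives

variable {F : ℂ → ℂ} {r θ : ℝ}

theorem hasDerivAt_radius_comp_circleMap (hF : DifferentiableAt ℂ F (circleMap 0 r θ)) :
    HasDerivAt (fun s : ℝ => F (circleMap 0 s θ)) (radialDeriv F r θ) r :=
  hF.hasDerivAt.comp r (hasDerivAt_circleMap_radius 0 r θ)

theorem hasDerivAt_angle_comp_circleMap (hF : DifferentiableAt ℂ F (circleMap 0 r θ)) :
    HasDerivAt (fun t : ℝ => F (circleMap 0 r t)) (angularDeriv F r θ) θ :=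
  hF.hasDerivAt.comp θ (hasDerivAt_circleMap 0 r θ)

theorem hasDerivAt_radius_angularDeriv (hF : DifferentiableAt ℂ (deriv F) (circleMap 0 r θ)) :
    HasDerivAt (fun s : ℝ => angularDeriv F s θ) (mixedDeriv F r θ) r := by
  have hI : HasDerivAt (fun s : ℝ => I * s) I r := by
    simpa using (ofRealCLM.hasDerivAt (x := r)).const_mul I
  rw [show (fun s : ℝ => angularDeriv F s θ) = fun s => I * s * radialDeriv F s θ from
    funext fun s => angularDeriv_eq F s θ]
  exact (hI.mul ((hasDerivAt_radius_comp_circleMap hF).mul_const (circleMap 0 1 θ))).congr_deriv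
    (by simp only [mixedDeriv, radialDeriv]; ring)

theorem hasDerivAt_angle_radialDeriv (hF : DifferentiableAt ℂ (deriv F) (circleMap 0 r θ)) :
    HasDerivAt (fun t : ℝ => radialDeriv F r t) (mixedDeriv F r θ) θ :=
  ((hasDerivAt_angle_comp_circleMap hF).mul (hasDerivAt_circleMap 0 1 θ)).congr_deriv
    (by simp only [mixedDeriv, radialDeriv, angularDeriv_eq]; ring)

end Derivatives

noncomputable def conjMulAngularDeriv (F : ℂ → ℂ) (r θ : ℝ) : ℂ :=
  conj (F (circleMap 0 r θ)) * angularDeriv F r θ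

noncomputable def conjMulRadialDeriv (F : ℂ → ℂ) (r θ : ℝ) : ℂ :=
  conj (F (circleMap 0 r θ)) * radialDeriv F r θ

noncomputable def angularDerivConjMulRadialDeriv (F : ℂ → ℂ) (r θ : ℝ) : ℂ :=
  conj (angularDeriv F r θ) * radialDeriv F r θ + conj (F (circleMap 0 r θ)) * mixedDeriv F r θ

theorem periodic_conjMulRadialDeriv (F : ℂ → ℂ) (r : ℝ) :
    Periodic (conjMulRadialDeriv F r) (2 * π) := by
  intro θ
  simp only [conjMulRadialDeriv, radialDeriv, periodic_circleMap 0 _ θ]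

theorem norm_radialDeriv (F : ℂ → ℂ) (r θ : ℝ) :
    ‖radialDeriv F r θ‖ = ‖deriv F (circleMap 0 r θ)‖ := by
  simp [radialDeriv]

section Holomorphic

variable {Q : ℂ → ℂ} {R r : ℝ} (hQ : AnalyticOnNhd ℂ Q (closedBall 0 R))
include hQ

theorem hasDerivAt_angle_conjMulRadialDeriv (hr : r ∈ Icc 0 R) (θ : ℝ) :
    HasDerivAt (conjMulRadialDeriv Q r) (angularDerivConjMulRadialDeriv Q r θ) θ := by
  have hc := circleMap_mem_closedBall_of_mem_Icc hr θ
  exact ((hasDerivAt_angle_comp_circleMap (hQ _ hc).differentiableAt).star.mul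
    (hasDerivAt_angle_radialDeriv (hQ.deriv _ hc).differentiableAt))

theorem hasDerivAt_radius_conjMulAngularDeriv (hr : r ∈ Icc 0 R) (θ : ℝ) :
    HasDerivAt (fun s => conjMulAngularDeriv Q s θ)
      (angularDerivConjMulRadialDeriv Q r θ +
        2 * I * r * ((‖deriv Q (circleMap 0 r θ)‖ ^ 2 : ℝ) : ℂ)) r := by
  have hc := circleMap_mem_closedBall_of_mem_Icc hr θ
  refine ((hasDerivAt_radius_comp_circleMap (hQ _ hc).differentiableAt).star.mul
    (hasDerivAt_radius_angularDeriv (hQ.deriv _ hc).differentiableAt)).congr_deriv ?_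
  have hsq : conj (radialDeriv Q r θ) * radialDeriv Q r θ
      = ((‖deriv Q (circleMap 0 r θ)‖ ^ 2 : ℝ) : ℂ) := by
    rw [← norm_radialDeriv, mul_comm, mul_conj', ofReal_pow]
  simp only [angularDerivConjMulRadialDeriv, angularDeriv_eq, map_mul, conj_I, conj_ofReal,
    ← starRingEnd_apply]
  linear_combination (2 * I * r) * hsq

theorem continuousOn_angularDerivConjMulRadialDeriv :
    ContinuousOn (uncurry (angularDerivConjMulRadialDeriv Q)) (Icc 0 R ×ˢ univ) := by
  have h0 := hQ.continuousOn.comp_uncurry_circleMap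
  have h1 := hQ.deriv.continuousOn.comp_uncurry_circleMap
  have h2 := hQ.deriv.deriv.continuousOn.comp_uncurry_circleMap
  have hc : ContinuousOn (fun p : ℝ × ℝ => circleMap 0 p.1 p.2) (Icc 0 R ×ˢ univ) :=
    (continuous_uncurry_circleMap 0).continuousOn
  have he : ContinuousOn (fun p : ℝ × ℝ => circleMap 0 1 p.2) (Icc 0 R ×ˢ univ) :=
    ((continuous_circleMap 0 1).comp continuous_snd).continuousOn
  have hr : ContinuousOn (fun p : ℝ × ℝ => (p.1 : ℂ)) (Icc 0 R ×ˢ univ) :=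
    (continuous_ofReal.comp continuous_fst).continuousOn
  simp only [uncurry_def, angularDerivConjMulRadialDeriv, mixedDeriv, angularDeriv, radialDeriv]
  apply_rules [ContinuousOn.add, ContinuousOn.mul, continuous_conj.comp_continuousOn,
    continuousOn_const]

theorem continuous_angularDerivConjMulRadialDeriv (hr : r ∈ Icc 0 R) :
    Continuous (angularDerivConjMulRadialDeriv Q r) := by
  simpa only [comp_def, uncurry_apply_pair] using
    (continuousOn_angularDerivConjMulRadialDeriv hQ).comp_continuous
      (Continuous.prodMk_right r) fun θ => mk_mem_prod hr (mem_univ θ)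

theorem intervalIntegral_angularDerivConjMulRadialDeriv_eq_zero (hr : r ∈ Icc 0 R) :
    ∫ θ in 0..2 * π, angularDerivConjMulRadialDeriv Q r θ = 0 := by
  rw [intervalIntegral.integral_eq_sub_of_hasDerivAt
    (fun θ _ => hasDerivAt_angle_conjMulRadialDeriv hQ hr θ)
    ((continuous_angularDerivConjMulRadialDeriv hQ hr).intervalIntegrable _ _),
    (periodic_conjMulRadialDeriv Q r).eq, sub_self]

theorem continuousOn_angularDerivConjMulRadialDeriv_add :
    ContinuousOn (fun p : ℝ × ℝ => angularDerivConjMulRadialDeriv Q p.1 p.2 +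
      2 * I * p.1 * ((‖deriv Q (circleMap 0 p.1 p.2)‖ ^ 2 : ℝ) : ℂ)) (Icc 0 R ×ˢ univ) := by
  have h1 := hQ.deriv.continuousOn.norm.comp_uncurry_circleMap
  have h2 := continuousOn_angularDerivConjMulRadialDeriv hQ
  simp only [uncurry_def] at h2
  fun_prop

theorem intervalIntegral_conjMulAngularDeriv_eq_integral_integral (hR : 0 ≤ R) :
    ∫ θ in 0..2 * π, conjMulAngularDeriv Q R θ
      = ∫ r in 0..R, ∫ θ in 0..2 * π, (angularDerivConjMulRadialDeriv Q r θ +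
          2 * I * r * ((‖deriv Q (circleMap 0 r θ)‖ ^ 2 : ℝ) : ℂ)) := by
  have hG := continuousOn_angularDerivConjMulRadialDeriv_add hQ
  have hftc (θ : ℝ) : conjMulAngularDeriv Q R θ = ∫ r in 0..R, (angularDerivConjMulRadialDeriv Q r θ +
      2 * I * r * ((‖deriv Q (circleMap 0 r θ)‖ ^ 2 : ℝ) : ℂ)) := by
    rw [intervalIntegral.integral_eq_sub_of_hasDerivAt
      (fun r hr => hasDerivAt_radius_conjMulAngularDeriv hQ (by rwa [uIcc_of_le hR] at hr) θ)
      ((hG.comp (Continuous.prodMk_left θ).continuousOn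
        fun r hr => mk_mem_prod hr (mem_univ θ)).intervalIntegrable_of_Icc hR)]
    simp [conjMulAngularDeriv, angularDeriv]
  rw [intervalIntegral.integral_congr fun θ _ => hftc θ]
  refine (intervalIntegral_intervalIntegral_swap ?_).symm
  rw [uIoc_of_le hR, uIoc_of_le two_pi_pos.le]
  exact ((hG.mono (prod_mono subset_rfl (subset_univ _))).integrableOn_compact
    (isCompact_Icc.prod isCompact_Icc)).mono_set
    (prod_mono Ioc_subset_Icc_self Ioc_subset_Icc_self)

theorem intervalIntegral_angularDerivConjMulRadialDeriv_add (hr : r ∈ Icc 0 R) :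
    ∫ θ in 0..2 * π, (angularDerivConjMulRadialDeriv Q r θ +
        2 * I * r * ((‖deriv Q (circleMap 0 r θ)‖ ^ 2 : ℝ) : ℂ))
      = 2 * I * (r • ∫ θ in 0..2 * π, ((‖deriv Q (circleMap 0 r θ)‖ ^ 2 : ℝ) : ℂ)) := by
  have hnorm : Continuous fun θ => ((‖deriv Q (circleMap 0 r θ)‖ ^ 2 : ℝ) : ℂ) :=
    continuous_ofReal.comp ((hQ.deriv.continuousOn.comp_continuous (continuous_circleMap 0 r)
      (circleMap_mem_closedBall_of_mem_Icc hr)).norm.pow 2)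
  have hm : IntervalIntegrable (fun θ => 2 * I * r * ((‖deriv Q (circleMap 0 r θ)‖ ^ 2 : ℝ) : ℂ))
      volume 0 (2 * π) := (continuous_const.mul hnorm).intervalIntegrable _ _
  rw [intervalIntegral.integral_add
    ((continuous_angularDerivConjMulRadialDeriv hQ hr).intervalIntegrable _ _) hm,
    intervalIntegral_angularDerivConjMulRadialDeriv_eq_zero hQ hr, intervalIntegral.integral_const_mul,
    zero_add, real_smul]
  ring

theorem intervalIntegral_conjMulAngularDeriv_eq_setIntegral_ball (hR : 0 ≤ R) :
    ∫ θ in 0..2 * π, conjMulAngularDeriv Q R θ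
      = 2 * I * ((∫ z in ball 0 R, ‖deriv Q z‖ ^ 2 : ℝ) : ℂ) := by
  rw [intervalIntegral_conjMulAngularDeriv_eq_integral_integral hQ hR,
    intervalIntegral.integral_congr fun r hr => intervalIntegral_angularDerivConjMulRadialDeriv_add hQ
      (by rwa [uIcc_of_le hR] at hr),
    intervalIntegral.integral_const_mul, ← integral_complex_ofReal,
    setIntegral_ball_eq_intervalIntegral_circleMap (f := fun z => ((‖deriv Q z‖ ^ 2 : ℝ) : ℂ)) hR
      (continuous_ofReal.comp_continuousOn (hQ.deriv.continuousOn.norm.pow 2))]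

end Holomorphic

/-- For `Q` holomorphic on a neighborhood of the closed unit disc,
`∫₀^{2π} conj(Q(e^{iψ})) (d/dψ)[Q(e^{iψ})] dψ = 2i ∬_𝔻 |Q′(w)|² dA`. -/
theorem boundary_integral_eq_area_integral (Q : ℂ → ℂ) (U : Set ℂ) (hU : IsOpen U)
    (hsub : Metric.closedBall (0:ℂ) 1 ⊆ U) (hQ : DifferentiableOn ℂ Q U) :
    (∫ ψ in (0:ℝ)..(2 * π),
        (starRingEnd ℂ) (Q (Complex.exp (Complex.I * (ψ : ℂ)))) *
          deriv (fun x : ℝ => Q (Complex.exp (Complex.I * (x : ℂ)))) ψ)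
      = 2 * Complex.I * ((∫ w in Metric.ball (0:ℂ) 1, ‖deriv Q w‖ ^ 2 : ℝ) : ℂ) := by
  have hQ' : AnalyticOnNhd ℂ Q (closedBall 0 1) := (hQ.analyticOnNhd hU).mono hsub
  have hexp (x : ℝ) : exp (I * x) = circleMap 0 1 x := by simp [circleMap, mul_comm]
  simp_rw [hexp]
  rw [← intervalIntegral_conjMulAngularDeriv_eq_setIntegral_ball hQ' zero_le_one]
  refine intervalIntegral.integral_congr fun ψ _ => ?_
  rw [(hasDerivAt_angle_comp_circleMap
    (hQ' _ (circleMap_mem_closedBall 0 zero_le_one ψ)).differentiableAt).deriv]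
  rfl
end

section
/- Let f : S¹ → ℝ be smooth with mean zero. Then the product f · Hf is L²-orthogonal to the span of {1, sin θ, cos θ}: that is, ∫_{S¹} f(θ) Hf(θ) dθ = 0, ∫_{S¹} f(θ) Hf(θ) cos θ dθ = 0, and ∫_{S¹} f(θ) Hf(θ) sin θ dθ = 0. -/
open MeasureTheory Real
open scoped ContDiff

lemma hasDerivAt_cexp_lin (c : ℂ) (θ : ℝ) :
    HasDerivAt (fun x : ℝ => Complex.exp (c * x)) (c * Complex.exp (c * θ)) θ := by
  have h : HasDerivAt (fun y : ℂ => c * y) c (θ : ℂ) := by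
    simpa using (hasDerivAt_id (θ:ℂ)).const_mul c
  simpa [mul_comm] using (h.cexp).comp_ofReal

lemma integral_f_exp (f : ℝ → ℝ) (m : ℤ) :
    (∫ θ in (0:ℝ)..(2*π), (f θ : ℂ) * Complex.exp (Complex.I * (m : ℂ) * (θ : ℂ)))
      = 2 * π * fourierC f (-m) := by
  rw [fourierC]
  have h : ∀ θ : ℝ, (f θ : ℂ) * Complex.exp (-Complex.I * ((-m : ℤ) : ℂ) * (θ : ℂ))
      = (f θ : ℂ) * Complex.exp (Complex.I * (m : ℂ) * (θ : ℂ)) := by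
    intro θ; congr 2; push_cast; ring
  simp_rw [h]
  have hπ : (π : ℂ) ≠ 0 := by exact_mod_cast Real.pi_ne_zero
  field_simp

lemma fourierC_deriv (g : ℝ → ℝ) (hgd : Differentiable ℝ g) (hg'c : Continuous (deriv g))
    (hper : g (2*π) = g 0) (n : ℤ) (hn : n ≠ 0) :
    fourierC g n = fourierC (deriv g) n / (Complex.I * n) := by
  set c : ℂ := -Complex.I * n with hc
  have hc0 : c ≠ 0 := by
    simp [hc, hn, Complex.I_ne_zero]
  have hgc : Continuous g := hgd.continuous
  have hF : ∀ θ ∈ Set.uIcc (0:ℝ) (2*π),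
      HasDerivAt (fun x : ℝ => (g x : ℂ) * (Complex.exp (c * x) / c))
        (((deriv g θ : ℝ) : ℂ) * (Complex.exp (c * θ) / c) + (g θ : ℂ) * Complex.exp (c * θ)) θ := by
    intro θ _
    have h1 : HasDerivAt (fun x : ℝ => (g x : ℂ)) (((deriv g θ : ℝ) : ℂ)) θ :=
      ((hgd θ).hasDerivAt).ofReal_comp
    have h2 : HasDerivAt (fun x : ℝ => Complex.exp (c * x) / c)
        ((c * Complex.exp (c * θ)) / c) θ := (hasDerivAt_cexp_lin c θ).div_const c
    have h3 := h1.mul h2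
    rw [mul_div_cancel_left₀ _ hc0] at h3
    exact h3
  have hFint : IntervalIntegrable
      (fun θ : ℝ => ((deriv g θ : ℝ) : ℂ) * (Complex.exp (c * θ) / c) + (g θ : ℂ) * Complex.exp (c * θ))
      volume 0 (2*π) := by
    apply Continuous.intervalIntegrable
    fun_prop
  have key := intervalIntegral.integral_eq_sub_of_hasDerivAt hF hFint
  have hboundary : (g (2*π) : ℂ) * (Complex.exp (c * ((2*π:ℝ):ℂ)) / c)
      - (g 0 : ℂ) * (Complex.exp (c * ((0:ℝ):ℂ)) / c) = 0 := by
    have he : Complex.exp (c * ((2*π:ℝ):ℂ)) = 1 := by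
      have : c * ((2*π:ℝ):ℂ) = ((-n : ℤ) : ℂ) * (2 * π * Complex.I) := by
        simp [hc]; push_cast; ring
      rw [this, Complex.exp_int_mul_two_pi_mul_I]
    rw [he, hper]
    simp
  rw [hboundary] at key
  have hi1 : IntervalIntegrable (fun θ : ℝ => ((deriv g θ : ℝ) : ℂ) * (Complex.exp (c * θ) / c))
      volume 0 (2*π) := by apply Continuous.intervalIntegrable; fun_prop
  have hi2 : IntervalIntegrable (fun θ : ℝ => (g θ : ℂ) * Complex.exp (c * θ))
      volume 0 (2*π) := by apply Continuous.intervalIntegrable; fun_prop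
  rw [intervalIntegral.integral_add hi1 hi2] at key
  have e1 : (∫ θ in (0:ℝ)..(2*π), ((deriv g θ : ℝ) : ℂ) * (Complex.exp (c * θ) / c))
      = (∫ θ in (0:ℝ)..(2*π), ((deriv g θ : ℝ) : ℂ) * Complex.exp (c * θ)) / c := by
    rw [← intervalIntegral.integral_div]
    congr 1; ext θ; ring
  rw [e1] at key
  have hid : ∀ (h : ℝ → ℝ), fourierC h n
      = (1 / (2 * π)) * ∫ θ in (0:ℝ)..(2*π), (h θ : ℂ) * Complex.exp (c * θ) := by
    intro h
    rw [fourierC]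
  rw [hid g, hid (deriv g)]
  have hI : (∫ θ in (0:ℝ)..(2*π), (g θ : ℂ) * Complex.exp (c * θ))
      = - ((∫ θ in (0:ℝ)..(2*π), ((deriv g θ : ℝ) : ℂ) * Complex.exp (c * θ)) / c) := by
    linear_combination key
  rw [hI]
  rw [hc]
  have hπ : (π : ℂ) ≠ 0 := by exact_mod_cast Real.pi_ne_zero
  have hnc : (n : ℂ) ≠ 0 := by exact_mod_cast hn
  field_simp

lemma norm_fourierC_le (g : ℝ → ℝ) {C : ℝ} (hC : ∀ x ∈ Set.Icc (0:ℝ) (2*π), |g x| ≤ C) (n : ℤ) :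
    ‖fourierC g n‖ ≤ C := by
  have h2π : (0:ℝ) ≤ 2 * π := by positivity
  have hCnn : 0 ≤ C := le_trans (abs_nonneg _) (hC 0 ⟨le_refl _, h2π⟩)
  rw [fourierC, norm_mul]
  have hbound : ∀ x ∈ Set.uIoc (0:ℝ) (2*π),
      ‖(g x : ℂ) * Complex.exp (-Complex.I * (n : ℂ) * (x : ℂ))‖ ≤ C := by
    intro x hx
    rw [Set.uIoc_of_le h2π] at hx
    have hx' : x ∈ Set.Icc (0:ℝ) (2*π) := ⟨le_of_lt hx.1, hx.2⟩
    rw [norm_mul]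
    have he : ‖Complex.exp (-Complex.I * (n : ℂ) * (x : ℂ))‖ = 1 := by
      have : -Complex.I * (n : ℂ) * (x : ℂ) = ((-(n * x) : ℝ) : ℂ) * Complex.I := by
        push_cast; ring
      rw [this]
      exact Complex.norm_exp_ofReal_mul_I _
    rw [he, mul_one, Complex.norm_real, Real.norm_eq_abs]
    exact hC x hx'
  have := intervalIntegral.norm_integral_le_of_norm_le_const hbound
  have hnorm : ‖(1 / (2 * π) : ℂ)‖ = 1 / (2 * π) := by
    rw [norm_div, norm_one]
    congr 1
    rw [show ((2 * π : ℂ)) = ((2 * π : ℝ) : ℂ) by push_cast; ring, Complex.norm_real,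
      Real.norm_eq_abs, abs_of_nonneg h2π]
  rw [hnorm]
  calc 1 / (2*π) * ‖∫ θ in (0:ℝ)..(2*π), (g θ : ℂ) * Complex.exp (-Complex.I * (n:ℂ) * (θ:ℂ))‖
      ≤ 1 / (2*π) * (C * |2*π - 0|) := by
        apply mul_le_mul_of_nonneg_left this
        positivity
    _ = C := by
        rw [sub_zero, abs_of_nonneg h2π]
        field_simp

lemma summable_norm_fourierC (f : ℝ → ℝ) (hc2 : Continuous (deriv (deriv f)))
    (hderiv1 : ∀ n : ℤ, n ≠ 0 → fourierC f n = fourierC (deriv f) n / (Complex.I * n))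
    (hderiv2 : ∀ n : ℤ, n ≠ 0 →
      fourierC (deriv f) n = fourierC (deriv (deriv f)) n / (Complex.I * n)) :
    Summable (fun n : ℤ => ‖fourierC f n‖) := by
  obtain ⟨C, hC⟩ : ∃ C, ∀ x ∈ Set.Icc (0:ℝ) (2*π), ‖deriv (deriv f) x‖ ≤ C :=
    isCompact_Icc.exists_bound_of_continuousOn hc2.continuousOn
  have hC' : ∀ x ∈ Set.Icc (0:ℝ) (2*π), |deriv (deriv f) x| ≤ C := hC
  have hkey : ∀ n : ℤ, n ≠ 0 → ‖fourierC f n‖ ≤ C * (1 / (n:ℝ)^2) := by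
    intro n hn
    have hnr : ((n:ℝ)) ≠ 0 := Int.cast_ne_zero.mpr hn
    have hIn : ‖Complex.I * (n:ℂ)‖ = |(n:ℝ)| := by
      rw [norm_mul, Complex.norm_I, one_mul]
      rw [show ((n:ℂ)) = ((n:ℝ):ℂ) by push_cast; ring, Complex.norm_real, Real.norm_eq_abs]
    rw [hderiv1 n hn, hderiv2 n hn, norm_div, norm_div, hIn]
    have hb := norm_fourierC_le (deriv (deriv f)) hC' n
    rw [div_div]
    have habs : |(n:ℝ)| * |(n:ℝ)| = (n:ℝ)^2 := by
      rw [← abs_mul, ← sq, abs_of_nonneg (sq_nonneg _)]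
    rw [habs, mul_one_div]
    apply div_le_div_of_nonneg_right hb
    positivity
  have hs1 : Summable (fun n : ℤ => C * (1 / (n:ℝ)^2)) :=
    (summable_one_div_int_pow.mpr one_lt_two).mul_left C
  have hs2 : Summable (fun n : ℤ => if n = 0 then ‖fourierC f 0‖ else 0) := by
    apply summable_of_ne_finset_zero (s := ({0} : Finset ℤ))
    intro n hn
    simp only [Finset.mem_singleton] at hn
    simp [hn]
  apply Summable.of_nonneg_of_le (fun n => norm_nonneg _) _ (hs1.add hs2)
  intro n
  by_cases hn : n = 0
  · simp [hn]
  · simp only [hn, if_false, add_zero]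
    exact hkey n hn

/-- For smooth mean-zero `f : S¹ → ℝ`, the product `f·Hf` is
`L²`-orthogonal to `1`, `cos θ` and `sin θ`. -/
theorem mul_hilbert_orthogonal (f : ℝ → ℝ)
    (hf : ContDiff ℝ (⊤ : ℕ∞) f)
    (hper : ∀ θ : ℝ, f (θ + 2 * π) = f θ)
    (hmean : (∫ θ in (0:ℝ)..(2 * π), f θ) = 0) :
    (∫ θ in (0:ℝ)..(2 * π), f θ * hilbertT f θ) = 0 ∧
    (∫ θ in (0:ℝ)..(2 * π), f θ * hilbertT f θ * Real.cos θ) = 0 ∧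
    (∫ θ in (0:ℝ)..(2 * π), f θ * hilbertT f θ * Real.sin θ) = 0 := by
  have h2π : (0:ℝ) ≤ 2 * π := by positivity
  have hSm1 : ContDiff ℝ (∞ : WithTop ℕ∞) f := hf.of_le (by simp)
  have hdf : Differentiable ℝ f := (contDiff_infty_iff_deriv.mp hSm1).1
  have hSm2 : ContDiff ℝ (∞ : WithTop ℕ∞) (deriv f) := (contDiff_infty_iff_deriv.mp hSm1).2
  have hdf2 : Differentiable ℝ (deriv f) := (contDiff_infty_iff_deriv.mp hSm2).1
  have hc2 : Continuous (deriv (deriv f)) := (contDiff_infty_iff_deriv.mp hSm2).2.continuous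
  have hcf : Continuous f := hdf.continuous
  have hc1 : Continuous (deriv f) := hdf2.continuous
  have hper0 : f (2*π) = f 0 := by simpa using hper 0
  have hperd : deriv f (2*π) = deriv f 0 := by
    have hfun : (fun x : ℝ => f (x + 2*π)) = f := funext hper
    have h1 : deriv f (0 + 2*π) = deriv f 0 := by
      rw [← deriv_comp_add_const, hfun]
    simpa using h1
  have hderiv1 : ∀ n : ℤ, n ≠ 0 → fourierC f n = fourierC (deriv f) n / (Complex.I * n) :=
    fun n hn => fourierC_deriv f hdf hc1 hper0 n hn
  have hderiv2 : ∀ n : ℤ, n ≠ 0 →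
      fourierC (deriv f) n = fourierC (deriv (deriv f)) n / (Complex.I * n) :=
    fun n hn => fourierC_deriv (deriv f) hdf2 hc2 hperd n hn
  have hsum : Summable (fun n : ℤ => ‖fourierC f n‖) :=
    summable_norm_fourierC f hc2 hderiv1 hderiv2
  have hc0 : fourierC f 0 = 0 := by
    rw [fourierC]
    simp only [Int.cast_zero, mul_zero, zero_mul, Complex.exp_zero, mul_one]
    rw [intervalIntegral.integral_ofReal, hmean]
    simp
  -- notation
  set a : ℤ → ℂ := fun n => -Complex.I * ((n.sign : ℤ) : ℂ) * fourierC f n with ha_def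
  set S : ℝ → ℂ := fun θ => ∑' n : ℤ, a n * Complex.exp (Complex.I * (n : ℂ) * (θ : ℂ)) with hS_def
  have hH : ∀ θ : ℝ, hilbertT f θ = (S θ).re := fun θ => rfl
  have hexp_norm : ∀ (z : ℤ) (θ : ℝ), ‖Complex.exp (Complex.I * (z:ℂ) * (θ:ℂ))‖ = 1 := by
    intro z θ
    have : Complex.I * (z : ℂ) * (θ : ℂ) = (((z * θ : ℝ)) : ℂ) * Complex.I := by
      push_cast; ring
    rw [this]
    exact Complex.norm_exp_ofReal_mul_I _
  have ha_norm : ∀ n : ℤ, ‖a n‖ ≤ ‖fourierC f n‖ := by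
    intro n
    rw [ha_def]
    simp only [norm_mul, norm_neg, Complex.norm_I, one_mul]
    have hs : ‖((n.sign : ℤ) : ℂ)‖ ≤ 1 := by
      rcases lt_trichotomy n 0 with h|h|h
      · rw [Int.sign_eq_neg_one_of_neg h]; simp
      · rw [h, Int.sign_zero]; simp
      · rw [Int.sign_eq_one_of_pos h]; simp
    calc ‖((n.sign : ℤ) : ℂ)‖ * ‖fourierC f n‖ ≤ 1 * ‖fourierC f n‖ :=
          mul_le_mul_of_nonneg_right hs (norm_nonneg _)
      _ = ‖fourierC f n‖ := one_mul _
  have hS_cont : Continuous S := by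
    rw [hS_def]
    apply continuous_tsum (u := fun n => ‖fourierC f n‖) (fun n => by fun_prop) hsum
    intro n θ
    rw [norm_mul, hexp_norm, mul_one]
    exact ha_norm n
  obtain ⟨Cf, hCf⟩ : ∃ C, ∀ x ∈ Set.Icc (0:ℝ) (2*π), ‖f x‖ ≤ C :=
    isCompact_Icc.exists_bound_of_continuousOn hcf.continuousOn
  have hCfnn : 0 ≤ Cf := le_trans (norm_nonneg _) (hCf 0 ⟨le_refl _, h2π⟩)
  -- the key vanishing of complex integrals
  have key : ∀ k : ℤ, (k = -1 ∨ k = 0 ∨ k = 1) →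
      (∫ θ in (0:ℝ)..(2*π), (f θ : ℂ) * S θ * Complex.exp (Complex.I * (k:ℂ) * (θ:ℂ))) = 0 := by
    intro k hk
    set F : ℤ → ℝ → ℂ := fun n θ => (f θ : ℂ) *
      (a n * Complex.exp (Complex.I * (n:ℂ) * (θ:ℂ))) * Complex.exp (Complex.I * (k:ℂ) * (θ:ℂ))
      with hF_def
    have hptw : ∀ θ : ℝ, (f θ : ℂ) * S θ * Complex.exp (Complex.I * (k:ℂ) * (θ:ℂ))
        = ∑' n : ℤ, F n θ := by
      intro θ
      rw [hS_def]
      simp only []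
      rw [← tsum_mul_left, ← tsum_mul_right]
    have hFcont : ∀ n : ℤ, Continuous (F n) := by
      intro n; rw [hF_def]; fun_prop
    have hF_int : ∀ n : ℤ, Integrable (F n) (volume.restrict (Set.Ioc (0:ℝ) (2*π))) :=
      fun n => (hFcont n).integrableOn_Ioc
    have hF_norm : ∀ (n : ℤ) (θ : ℝ), θ ∈ Set.Icc (0:ℝ) (2*π) → ‖F n θ‖ ≤ Cf * ‖fourierC f n‖ := by
      intro n θ hθ
      rw [hF_def]
      simp only [norm_mul]
      rw [hexp_norm, hexp_norm, mul_one, mul_one, Complex.norm_real]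
      apply mul_le_mul (hCf θ hθ) (ha_norm n) (norm_nonneg _) hCfnn
    have hF_sum : Summable (fun n : ℤ => ∫ θ in Set.Ioc (0:ℝ) (2*π), ‖F n θ‖) := by
      refine Summable.of_nonneg_of_le
        (fun n => integral_nonneg (fun θ => norm_nonneg _)) (fun n => ?_)
        ((hsum.mul_left Cf).mul_left (2*π))
      · have hle : ∀ θ ∈ Set.Ioc (0:ℝ) (2*π), ‖F n θ‖ ≤ Cf * ‖fourierC f n‖ :=
          fun θ hθ => hF_norm n θ ⟨le_of_lt hθ.1, hθ.2⟩
        calc (∫ θ in Set.Ioc (0:ℝ) (2*π), ‖F n θ‖)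
            ≤ (∫ _ in Set.Ioc (0:ℝ) (2*π), (Cf * ‖fourierC f n‖)) := by
              apply setIntegral_mono_on ((hFcont n).norm.integrableOn_Ioc)
                (integrableOn_const (by rw [Real.volume_Ioc]; exact ENNReal.ofReal_ne_top))
                measurableSet_Ioc hle
          _ = (2*π) * (Cf * ‖fourierC f n‖) := by
              rw [setIntegral_const, Real.volume_real_Ioc_of_le h2π, smul_eq_mul]
              congr 1
              ring
    have hterm : ∀ n : ℤ, (∫ θ in Set.Ioc (0:ℝ) (2*π), F n θ)
        = (2*π) * (a n * fourierC f (-(n+k))) := by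
      intro n
      rw [← intervalIntegral.integral_of_le h2π]
      have hp : ∀ θ : ℝ, F n θ
          = a n * ((f θ : ℂ) * Complex.exp (Complex.I * ((n+k : ℤ):ℂ) * (θ:ℂ))) := by
        intro θ
        rw [hF_def]
        have he : Complex.exp (Complex.I * (n:ℂ) * (θ:ℂ)) * Complex.exp (Complex.I * (k:ℂ) * (θ:ℂ))
            = Complex.exp (Complex.I * ((n+k : ℤ):ℂ) * (θ:ℂ)) := by
          rw [← Complex.exp_add]; congr 1; push_cast; ring
        calc (f θ : ℂ) * (a n * Complex.exp (Complex.I * (n:ℂ) * (θ:ℂ)))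
              * Complex.exp (Complex.I * (k:ℂ) * (θ:ℂ))
            = a n * ((f θ : ℂ) * (Complex.exp (Complex.I * (n:ℂ) * (θ:ℂ))
              * Complex.exp (Complex.I * (k:ℂ) * (θ:ℂ)))) := by ring
          _ = a n * ((f θ : ℂ) * Complex.exp (Complex.I * ((n+k : ℤ):ℂ) * (θ:ℂ))) := by rw [he]
      simp_rw [hp]
      rw [intervalIntegral.integral_const_mul, integral_f_exp f (n+k)]
      ring
    -- assemble
    rw [intervalIntegral.integral_of_le h2π]
    have heq : (∫ θ in Set.Ioc (0:ℝ) (2*π),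
        (f θ : ℂ) * S θ * Complex.exp (Complex.I * (k:ℂ) * (θ:ℂ)))
        = ∑' n : ℤ, (∫ θ in Set.Ioc (0:ℝ) (2*π), F n θ) := by
      rw [MeasureTheory.integral_tsum_of_summable_integral_norm hF_int hF_sum]
      apply setIntegral_congr_fun measurableSet_Ioc
      intro θ _
      exact hptw θ
    rw [heq]
    have : (fun n : ℤ => (∫ θ in Set.Ioc (0:ℝ) (2*π), F n θ))
        = fun n : ℤ => (2*π) * (a n * fourierC f (-(n+k))) := funext hterm
    rw [this, tsum_mul_left]
    -- now show the tsum vanishes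
    set g : ℤ → ℂ := fun n => a n * fourierC f (-(n+k)) with hg_def
    have hanti : ∀ n : ℤ, g (-k - n) = - g n := by
      intro n
      rw [hg_def]
      simp only []
      have h1 : -(-k - n + k) = n := by ring
      have h2 : (-k - n) = -(n+k) := by ring
      rw [h1, h2, ha_def]
      simp only []
      have hs : (((-(n+k)).sign : ℤ) : ℂ) * fourierC f (-(n+k)) * fourierC f n
          + ((n.sign : ℤ) : ℂ) * fourierC f n * fourierC f (-(n+k)) = 0 := by
        by_cases hn : n = 0
        · rw [hn] at *
          simp [hc0]
        · by_cases hm : n + k = 0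
          · rw [show -(n+k) = 0 by omega]
            simp [hc0]
          · have hsgn : ((-(n+k)).sign : ℤ) = - n.sign := by
              rcases lt_trichotomy n 0 with h|h|h
              · have hnk : n + k < 0 := by rcases hk with rfl|rfl|rfl <;> omega
                rw [Int.sign_eq_one_of_pos (by omega), Int.sign_eq_neg_one_of_neg h]
                norm_num
              · exact absurd h hn
              · have hnk : 0 < n + k := by rcases hk with rfl|rfl|rfl <;> omega
                rw [Int.sign_eq_neg_one_of_neg (by omega), Int.sign_eq_one_of_pos h]
            rw [hsgn]
            push_cast
            ring
      linear_combination (-Complex.I) * hs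
    have hT := (Equiv.subLeft (-k)).tsum_eq g
    have hT' : ∑' n : ℤ, g (-k - n) = ∑' n : ℤ, g n := by
      simpa [Equiv.subLeft] using hT
    rw [tsum_congr hanti, tsum_neg] at hT'
    have hTzero : (∑' n : ℤ, g n) = 0 := by
      have := hT'
      have h2 : (∑' n : ℤ, g n) + (∑' n : ℤ, g n) = 0 := by
        nth_rewrite 1 [← this]; ring
      exact add_self_eq_zero.mp h2
    rw [hTzero, mul_zero]
  -- extract the three statements
  have hGint : IntegrableOn (fun θ : ℝ => (f θ : ℂ) * S θ) (Set.Ioc (0:ℝ) (2*π)) := by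
    apply Continuous.integrableOn_Ioc; fun_prop
  have key0 : (∫ θ in (0:ℝ)..(2*π), (f θ : ℂ) * S θ) = 0 := by
    have := key 0 (Or.inr (Or.inl rfl))
    simpa using this
  have key1 := key 1 (Or.inr (Or.inr rfl))
  have keym1 := key (-1) (Or.inl rfl)
  -- interval integral of re
  have hre : ∀ (G : ℝ → ℂ), IntegrableOn G (Set.Ioc (0:ℝ) (2*π)) →
      (∫ θ in (0:ℝ)..(2*π), (G θ).re) = (∫ θ in (0:ℝ)..(2*π), G θ).re := by
    intro G hG
    rw [intervalIntegral.integral_of_le h2π, intervalIntegral.integral_of_le h2π]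
    rw [← RCLike.re_eq_complex_re, integral_re hG, RCLike.re_eq_complex_re]
  constructor
  · -- ∫ f Hf = 0
    have hpt : ∀ θ : ℝ, f θ * hilbertT f θ = ((f θ : ℂ) * S θ).re := by
      intro θ
      rw [hH θ, Complex.re_ofReal_mul]
    calc (∫ θ in (0:ℝ)..(2*π), f θ * hilbertT f θ)
        = (∫ θ in (0:ℝ)..(2*π), ((f θ : ℂ) * S θ).re) := by
          apply intervalIntegral.integral_congr; intro θ _; exact hpt θ
      _ = (∫ θ in (0:ℝ)..(2*π), (f θ : ℂ) * S θ).re := hre _ hGint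
      _ = 0 := by rw [key0]; rfl
  constructor
  · -- cos
    have hcos : ∀ θ : ℝ, ((Real.cos θ : ℝ) : ℂ)
        = (Complex.exp (Complex.I * ((1:ℤ):ℂ) * (θ:ℂ))
          + Complex.exp (Complex.I * ((-1:ℤ):ℂ) * (θ:ℂ))) / 2 := by
      intro θ
      rw [show Complex.I * ((1:ℤ):ℂ) * (θ:ℂ) = (θ:ℂ) * Complex.I by push_cast; ring,
        show Complex.I * ((-1:ℤ):ℂ) * (θ:ℂ) = (-(θ:ℂ)) * Complex.I by push_cast; ring,
        Complex.exp_mul_I, Complex.exp_mul_I, Complex.cos_neg, Complex.sin_neg,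
        Complex.ofReal_cos]
      ring
    have hint1 : IntervalIntegrable (fun θ : ℝ => (f θ : ℂ) * S θ *
        Complex.exp (Complex.I * ((1:ℤ):ℂ) * (θ:ℂ))) volume 0 (2*π) := by
      apply Continuous.intervalIntegrable; fun_prop
    have hintm1 : IntervalIntegrable (fun θ : ℝ => (f θ : ℂ) * S θ *
        Complex.exp (Complex.I * ((-1:ℤ):ℂ) * (θ:ℂ))) volume 0 (2*π) := by
      apply Continuous.intervalIntegrable; fun_prop
    have hcplx : (∫ θ in (0:ℝ)..(2*π), (f θ : ℂ) * S θ * ((Real.cos θ : ℝ) : ℂ)) = 0 := by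
      have hpt2 : ∀ θ : ℝ, (f θ : ℂ) * S θ * ((Real.cos θ : ℝ) : ℂ)
          = ((f θ : ℂ) * S θ * Complex.exp (Complex.I * ((1:ℤ):ℂ) * (θ:ℂ))
            + (f θ : ℂ) * S θ * Complex.exp (Complex.I * ((-1:ℤ):ℂ) * (θ:ℂ))) / 2 := by
        intro θ; rw [hcos θ]; ring
      rw [intervalIntegral.integral_congr (fun θ _ => hpt2 θ),
        intervalIntegral.integral_div, intervalIntegral.integral_add hint1 hintm1,
        key1, keym1]
      norm_num
    have hpt : ∀ θ : ℝ, f θ * hilbertT f θ * Real.cos θ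
        = ((f θ : ℂ) * S θ * ((Real.cos θ : ℝ) : ℂ)).re := by
      intro θ
      rw [hH θ, show (f θ : ℂ) * S θ * ((Real.cos θ : ℝ) : ℂ)
        = ((f θ * Real.cos θ : ℝ) : ℂ) * S θ by push_cast; ring, Complex.re_ofReal_mul]
      ring
    calc (∫ θ in (0:ℝ)..(2*π), f θ * hilbertT f θ * Real.cos θ)
        = (∫ θ in (0:ℝ)..(2*π), ((f θ : ℂ) * S θ * ((Real.cos θ : ℝ) : ℂ)).re) := by
          apply intervalIntegral.integral_congr; intro θ _; exact hpt θ
      _ = (∫ θ in (0:ℝ)..(2*π), (f θ : ℂ) * S θ * ((Real.cos θ : ℝ) : ℂ)).re := by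
          apply hre
          apply Continuous.integrableOn_Ioc
          have : Continuous (fun θ : ℝ => ((Real.cos θ : ℝ) : ℂ)) := by fun_prop
          fun_prop
      _ = 0 := by rw [hcplx]; rfl
  · -- sin
    have hsin : ∀ θ : ℝ, ((Real.sin θ : ℝ) : ℂ)
        = (Complex.exp (Complex.I * ((1:ℤ):ℂ) * (θ:ℂ))
          - Complex.exp (Complex.I * ((-1:ℤ):ℂ) * (θ:ℂ))) / (2 * Complex.I) := by
      intro θ
      rw [show Complex.I * ((1:ℤ):ℂ) * (θ:ℂ) = (θ:ℂ) * Complex.I by push_cast; ring,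
        show Complex.I * ((-1:ℤ):ℂ) * (θ:ℂ) = (-(θ:ℂ)) * Complex.I by push_cast; ring,
        Complex.exp_mul_I, Complex.exp_mul_I, Complex.cos_neg, Complex.sin_neg,
        Complex.ofReal_sin]
      field_simp
      ring
    have hint1 : IntervalIntegrable (fun θ : ℝ => (f θ : ℂ) * S θ *
        Complex.exp (Complex.I * ((1:ℤ):ℂ) * (θ:ℂ))) volume 0 (2*π) := by
      apply Continuous.intervalIntegrable; fun_prop
    have hintm1 : IntervalIntegrable (fun θ : ℝ => (f θ : ℂ) * S θ *
        Complex.exp (Complex.I * ((-1:ℤ):ℂ) * (θ:ℂ))) volume 0 (2*π) := by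
      apply Continuous.intervalIntegrable; fun_prop
    have hcplx : (∫ θ in (0:ℝ)..(2*π), (f θ : ℂ) * S θ * ((Real.sin θ : ℝ) : ℂ)) = 0 := by
      have hpt2 : ∀ θ : ℝ, (f θ : ℂ) * S θ * ((Real.sin θ : ℝ) : ℂ)
          = ((f θ : ℂ) * S θ * Complex.exp (Complex.I * ((1:ℤ):ℂ) * (θ:ℂ))
            - (f θ : ℂ) * S θ * Complex.exp (Complex.I * ((-1:ℤ):ℂ) * (θ:ℂ))) / (2 * Complex.I) := by
        intro θ; rw [hsin θ]; ring
      rw [intervalIntegral.integral_congr (fun θ _ => hpt2 θ)]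
      rw [show (fun θ : ℝ => ((f θ : ℂ) * S θ * Complex.exp (Complex.I * ((1:ℤ):ℂ) * (θ:ℂ))
            - (f θ : ℂ) * S θ * Complex.exp (Complex.I * ((-1:ℤ):ℂ) * (θ:ℂ))) / (2 * Complex.I))
          = (fun θ : ℝ => ((f θ : ℂ) * S θ * Complex.exp (Complex.I * ((1:ℤ):ℂ) * (θ:ℂ))
            - (f θ : ℂ) * S θ * Complex.exp (Complex.I * ((-1:ℤ):ℂ) * (θ:ℂ))) / (2 * Complex.I))
          from rfl]
      rw [intervalIntegral.integral_div, intervalIntegral.integral_sub hint1 hintm1,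
        key1, keym1]
      norm_num
    have hpt : ∀ θ : ℝ, f θ * hilbertT f θ * Real.sin θ
        = ((f θ : ℂ) * S θ * ((Real.sin θ : ℝ) : ℂ)).re := by
      intro θ
      rw [hH θ, show (f θ : ℂ) * S θ * ((Real.sin θ : ℝ) : ℂ)
        = ((f θ * Real.sin θ : ℝ) : ℂ) * S θ by push_cast; ring, Complex.re_ofReal_mul]
      ring
    calc (∫ θ in (0:ℝ)..(2*π), f θ * hilbertT f θ * Real.sin θ)
        = (∫ θ in (0:ℝ)..(2*π), ((f θ : ℂ) * S θ * ((Real.sin θ : ℝ) : ℂ)).re) := by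
          apply intervalIntegral.integral_congr; intro θ _; exact hpt θ
      _ = (∫ θ in (0:ℝ)..(2*π), (f θ : ℂ) * S θ * ((Real.sin θ : ℝ) : ℂ)).re := by
          apply hre
          apply Continuous.integrableOn_Ioc
          fun_prop
      _ = 0 := by rw [hcplx]; rfl
end

section
/- Cauchy integral representation of Fourier tails: let Φ(z) = Σ_{m=1}^∞ c_m z^m be holomorphic on an open neighborhood of the closed unit disc, and let Υ(w,z) = (Φ(w) − Φ(z))/(w − z), extended by Υ(z,z) = Φ′(z). Then for every integer n ≥ 1 and every z with |z| < 1, Σ_{m=n}^∞ c_m z^m = (1/2πi) ∮_{|w|=1} (z/w)^n Υ(w,z) dw. -/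
open MeasureTheory Real

/-! Expanding `(w - z)⁻¹ = Σⱼ zʲ / wʲ⁺¹` on the unit circle turns the integral into
`Σⱼ ∮ (z/w)^(n+j) (Φ(w) - Φ(z)) dw / w`. By Cauchy's formula for Taylor coefficients the `j`-th
term is `2πi c_{n+j} z^{n+j}`; the constant `Φ(z)` contributes nothing because `n + j ≥ 1`. -/

open Complex Metric FormalMultilinearSeries
open scoped NNReal ENNReal

theorem FormalMultilinearSeries.le_radius_ofScalars_of_summable {𝕜 : Type*}
    [NontriviallyNormedField 𝕜] {c : ℕ → 𝕜} {x : 𝕜} (h : Summable fun m => c m * x ^ m) :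
    (‖x‖₊ : ℝ≥0∞) ≤ (ofScalars 𝕜 c).radius := by
  refine le_radius_of_tendsto (l := 0) _ ?_
  simpa [ofScalars_norm] using h.tendsto_atTop_zero.norm

section CauchyCoefficients

variable {E : Type*} [NormedAddCommGroup E] [NormedSpace ℂ E] [CompleteSpace E]
  {f : ℂ → E} {p : FormalMultilinearSeries ℂ ℂ E} {c : ℂ} {r : ℝ≥0∞} {R : ℝ≥0}

theorem HasFPowerSeriesOnBall.circleIntegral_div_pow_smul_inv_smul
    (hf : HasFPowerSeriesOnBall f p c r) (hR : 0 < R) (hRr : (R : ℝ≥0∞) < r) (m : ℕ) (y : ℂ) :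
    (∮ w in C(c, R), (y / (w - c)) ^ m • (w - c)⁻¹ • f w) = (2 * π * I : ℂ) • p m fun _ => y := by
  have hd : DifferentiableOn ℂ f (closedBall c R) := hf.differentiableOn.mono fun w hw =>
    mem_eball.2 <| (edist_le_coe.2 (mem_closedBall.1 hw)).trans_lt hRr
  have hp : cauchyPowerSeries f c R = p :=
    (hd.hasFPowerSeriesOnBall hR).hasFPowerSeriesAt.eq_formalMultilinearSeries hf.hasFPowerSeriesAt
  rw [← hp, cauchyPowerSeries_apply, smul_inv_smul₀ two_pi_I_ne_zero]

theorem HasFPowerSeriesOnBall.hasSum_tail_circleIntegral_slope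
    (hf : HasFPowerSeriesOnBall f p c r) (hR : 0 < R) (hRr : (R : ℝ≥0∞) < r) {y : ℂ}
    (hy : ‖y‖ < R) {n : ℕ} (hn : n ≠ 0) :
    HasSum (fun j => p (n + j) fun _ => y)
      ((2 * π * I : ℂ)⁻¹ • ∮ w in C(c, R), (y / (w - c)) ^ n • slope f (c + y) w) := by
  have hcont : ContinuousOn f (sphere c R) := hf.continuousOn.mono fun w hw =>
    mem_eball.2 <| (edist_le_coe.2 (mem_sphere.1 hw).le).trans_lt hRr
  have hint : CircleIntegrable (fun w => (y / (w - c)) ^ n • (f w - f (c + y))) c R :=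
    ContinuousOn.circleIntegrable R.2 <|
      ((continuousOn_const.div (continuousOn_id.sub continuousOn_const) fun w hw =>
        sub_ne_zero.2 (ne_of_mem_sphere hw (NNReal.coe_ne_zero.2 hR.ne'))).pow n).smul
        (hcont.sub continuousOn_const)
  have hg : HasFPowerSeriesOnBall (fun w => f w - f (c + y))
      (p - constFormalMultilinearSeries ℂ ℂ (f (c + y))) c r :=
    hf.sub (hasFPowerSeriesOnBall_const.mono hf.r_pos le_top)
  have hterm : ∀ j, (∮ w in C(c, R), (y / (w - c)) ^ j • (w - c)⁻¹ • (y / (w - c)) ^ n •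
      (f w - f (c + y))) = (2 * π * I : ℂ) • p (n + j) fun _ => y := by
    intro j
    have := hg.circleIntegral_div_pow_smul_inv_smul hR hRr (n + j) y
    rw [FormalMultilinearSeries.sub_apply, constFormalMultilinearSeries_apply_of_nonzero (by omega),
      sub_zero] at this
    rw [← this]
    congr 1 with w
    simp only [smul_smul]
    ring_nf
  have hcauchy := hasSum_two_pi_I_cauchyPowerSeries_integral hint hy
  simp only [hterm, smul_comm (_ - (c + y))⁻¹] at hcauchy
  simpa only [inv_smul_smul₀ two_pi_I_ne_zero, slope, vsub_eq_sub] using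
    hcauchy.const_smul (2 * π * I : ℂ)⁻¹

end CauchyCoefficients

theorem cauchy_tail_representation_general (c : ℕ → ℂ)
    (hconv : ∃ r : ℝ, 1 < r ∧ ∀ z : ℂ, ‖z‖ < r → Summable fun m : ℕ => c m * z ^ m)
    (n : ℕ) (hn : 1 ≤ n) (z : ℂ) (hz : ‖z‖ < 1) :
    (∑' m : ℕ, c (n + m) * z ^ (n + m))
      = (1 / (2 * (π : ℂ) * Complex.I)) *
        ∮ w in C(0, 1), (z / w) ^ n *
          (if w = z then deriv (fun ζ : ℂ => ∑' m : ℕ, c m * ζ ^ m) z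
           else ((∑' m : ℕ, c m * w ^ m) - ∑' m : ℕ, c m * z ^ m) / (w - z)) := by
  obtain ⟨r, hr1, hsum⟩ := hconv
  have hradius : 1 < (ofScalars ℂ c).radius := by
    have hρ : ‖(((1 + r) / 2 : ℝ) : ℂ)‖ = (1 + r) / 2 := by
      rw [norm_real, norm_of_nonneg (by linarith)]
    refine lt_of_lt_of_le ?_ (le_radius_ofScalars_of_summable (hsum _ (by rw [hρ]; linarith)))
    rw [ENNReal.one_lt_coe_iff, ← NNReal.coe_lt_coe, coe_nnnorm, hρ, NNReal.coe_one]
    linarith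
  have hΦ : HasFPowerSeriesOnBall (fun ζ : ℂ => ∑' m : ℕ, c m * ζ ^ m) (ofScalars ℂ c) 0
      (ofScalars ℂ c).radius := by
    convert (ofScalars ℂ c).hasFPowerSeriesOnBall (zero_lt_one.trans hradius)
    simp [← ofScalarsSum.eq_def, ofScalarsSum_eq_tsum]
  have htail := hΦ.hasSum_tail_circleIntegral_slope one_pos (by simpa using hradius)
    (by simpa using hz) (by omega : n ≠ 0)
  simp only [ofScalars_apply_eq, smul_eq_mul, zero_add, sub_zero, NNReal.coe_one] at htail
  rw [htail.tsum_eq, one_div]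
  congr 1
  refine circleIntegral.integral_congr zero_le_one fun w hw => ?_
  have hwz : w ≠ z := ne_of_apply_ne norm (by rw [mem_sphere_zero_iff_norm.1 hw]; exact hz.ne')
  rw [if_neg hwz, slope_def_field]

/-- Cauchy integral representation of Fourier tails: for
`Φ(z) = Σ_{m≥1} c_m z^m` holomorphic on a neighborhood of the closed unit disc
(i.e. with radius of convergence `> 1`), for every `n ≥ 1` and `|z| < 1`,
`Σ_{m≥n} c_m z^m = (1/2πi) ∮_{|w|=1} (z/w)^n Υ(w,z) dw`. -/
theorem cauchy_tail_representation (c : ℕ → ℂ) (hc0 : c 0 = 0)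
    (hconv : ∃ r : ℝ, 1 < r ∧ ∀ z : ℂ, ‖z‖ < r → Summable fun m : ℕ => c m * z ^ m)
    (n : ℕ) (hn : 1 ≤ n) (z : ℂ) (hz : ‖z‖ < 1) :
    (∑' m : ℕ, c (n + m) * z ^ (n + m))
      = (1 / (2 * (π : ℂ) * Complex.I)) *
        ∮ w in C(0, 1), (z / w) ^ n *
          (if w = z then deriv (fun ζ : ℂ => ∑' m : ℕ, c m * ζ ^ m) z
           else ((∑' m : ℕ, c m * w ^ m) - ∑' m : ℕ, c m * z ^ m) / (w - z)) :=
  cauchy_tail_representation_general c hconv n hn z hz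
end
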